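/- arXiv:1401.4849 — 7 statements merged into one kernel-verified Lean document; each statement's English description precedes it below -/
import Mathlib

section
/- For any finite trees S and T on at least 2 vertices, δ(S,T) ≥ sup_{t>0} [ P(D_max(S) > t) − P(D_max(T) > t) ], where δ(S,T) = lim_{n→∞} TV(PA(n,S), PA(n,T)). -/
open MeasureTheory Filter Real
open scoped ENNReal

noncomputable section

/-- The degree of vertex `v` in a graph on `ℕ`. -/
def degN (G : SimpleGraph ℕ) (v : ℕ) : ℕ := (G.neighborSet v).ncard

/-- `G` is a tree on the vertex set `{0, …, k-1}` (all other vertices isolated). -/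
def IsTreeOn (k : ℕ) (G : SimpleGraph ℕ) : Prop :=
  (∀ v w : ℕ, G.Adj v w → v < k ∧ w < k) ∧ (G.induce {v : ℕ | v < k}).IsTree

instance : MeasurableSpace (SimpleGraph ℕ) := ⊤

/-- Add the edge `uv` to `G`. -/
def addEdge (G : SimpleGraph ℕ) (u v : ℕ) : SimpleGraph ℕ :=
  G ⊔ SimpleGraph.fromEdgeSet {s(u, v)}

/-- One step of preferential attachment: the current graph has `n` vertices `0, …, n-1`;
the new vertex `n` attaches to an existing vertex `v` with probability `deg v / (2(n-1))`. -/
def paStep (n : ℕ) (G : SimpleGraph ℕ) : Measure (SimpleGraph ℕ) :=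
  Measure.sum fun v : ℕ =>
    ((degN G v : ℝ≥0∞) / ((2 * (n - 1) : ℕ) : ℝ≥0∞)) • Measure.dirac (addEdge G n v)

def PAlawAux (k : ℕ) (T : SimpleGraph ℕ) : ℕ → Measure (SimpleGraph ℕ)
  | 0 => Measure.dirac T
  | m + 1 => (PAlawAux k T m).bind (paStep (k + m))

/-- The law of `PA(n, T)` for a seed tree `T` on `k` vertices, as a measure on labelled
graphs on `ℕ` (vertices are labelled `0, 1, 2, …` in order of arrival). -/
def PAlaw (k : ℕ) (T : SimpleGraph ℕ) (n : ℕ) : Measure (SimpleGraph ℕ) :=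
  PAlawAux k T (n - k)

/-- Graphs on `ℕ` up to isomorphism. -/
def graphSetoid : Setoid (SimpleGraph ℕ) where
  r G H := Nonempty (G ≃g H)
  iseqv := ⟨fun G => ⟨RelIso.refl G.Adj⟩, fun ⟨e⟩ => ⟨e.symm⟩, fun ⟨e⟩ ⟨f⟩ => ⟨e.trans f⟩⟩

/-- Isomorphism types of graphs on `ℕ`. -/
def GraphType : Type := Quotient graphSetoid

instance : MeasurableSpace GraphType := ⊤

/-- The law of the isomorphism type of `PA(n, T)`. -/
def PAtype (k : ℕ) (T : SimpleGraph ℕ) (n : ℕ) : Measure GraphType :=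
  (PAlaw k T n).map (Quotient.mk graphSetoid)

/-- Total variation distance between two measures. -/
def tvDist {α : Type*} [MeasurableSpace α] (μ ν : Measure α) : ℝ :=
  ⨆ A : Set α, |(μ A).toReal - (ν A).toReal|

/-- `δ(S, T) = lim_n TV(PA(n,S), PA(n,T))`, the total variation distance being taken
between the laws of the isomorphism types.  The limit exists since the sequence is
non-increasing; we express it as a `limsup`, which agrees with the limit. -/
def deltaPA (kS : ℕ) (S : SimpleGraph ℕ) (kT : ℕ) (T : SimpleGraph ℕ) : ℝ :=
  Filter.limsup (fun n : ℕ => tvDist (PAtype kS S n) (PAtype kT T n)) Filter.atTop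


/-- The maximum degree of a graph on `ℕ`. -/
def maxDeg (G : SimpleGraph ℕ) : ℕ := ⨆ v : ℕ, degN G v

/-!
For each `n` the event `Δ > c` is invariant under graph isomorphism, so the difference of its
probabilities under the two seeds is at most `TV(PA(n,S), PA(n,T))`. Almost sure convergence
of `Δ(PA(n,·))/√n` gives, for `s > t`,
`P(D_max(S) > s) ≤ liminf_n P(Δ(PA(n,S))/√n > s)` and
`limsup_n P(Δ(PA(n,T))/√n > s) ≤ P(D_max(T) ≥ s) ≤ P(D_max(T) > t)`;
letting `s ↓ t` gives the bound.

The only information needed about the attachment process is that its law is nonzero (a vertex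
of finite positive degree keeps that property under every attachment step); this makes the
maps `X n` almost everywhere measurable, so that their laws can be compared through `TV`.
-/

open Set Topology

section TotalVariation

variable {α : Type*} [MeasurableSpace α]

lemma abs_measureReal_sub_le (μ ν : Measure α) [IsFiniteMeasure μ] [IsFiniteMeasure ν]
    (A : Set α) : |μ.real A - ν.real A| ≤ μ.real univ + ν.real univ := by
  have hμ : μ.real A ≤ μ.real univ := measureReal_mono (subset_univ A)
  have hν : ν.real A ≤ ν.real univ := measureReal_mono (subset_univ A)
  rw [abs_le]
  constructor <;> linarith [measureReal_nonneg (μ := μ) (s := A),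
    measureReal_nonneg (μ := ν) (s := A)]

lemma tvDist_le (μ ν : Measure α) [IsFiniteMeasure μ] [IsFiniteMeasure ν] :
    tvDist μ ν ≤ μ.real univ + ν.real univ :=
  ciSup_le (abs_measureReal_sub_le μ ν)

lemma measureReal_sub_le_tvDist (μ ν : Measure α) [IsFiniteMeasure μ] [IsFiniteMeasure ν]
    (A : Set α) : μ.real A - ν.real A ≤ tvDist μ ν :=
  (le_abs_self _).trans <|
    le_ciSup (f := fun A => |μ.real A - ν.real A|)
      ⟨_, forall_mem_range.2 (abs_measureReal_sub_le μ ν)⟩ A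

lemma measureReal_preimage_sub_le_tvDist_map {β γ : Type*} [MeasurableSpace β]
    [MeasurableSpace γ] (μ : Measure β) (ν : Measure γ) [IsFiniteMeasure μ]
    [IsFiniteMeasure ν]
    {f : β → α} {g : γ → α} (hf : AEMeasurable f μ) (hg : AEMeasurable g ν) {A : Set α}
    (hA : MeasurableSet A) :
    μ.real (f ⁻¹' A) - ν.real (g ⁻¹' A) ≤ tvDist (μ.map f) (ν.map g) := by
  simpa only [measureReal_def, Measure.map_apply_of_aemeasurable hf hA,
    Measure.map_apply_of_aemeasurable hg hA]
    using measureReal_sub_le_tvDist (μ.map f) (ν.map g) A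

lemma tvDist_map_le {β γ : Type*} [MeasurableSpace β] [MeasurableSpace γ] (μ : Measure β)
    (ν : Measure γ) [IsFiniteMeasure μ] [IsFiniteMeasure ν] {f : β → α} {g : γ → α}
    (hf : AEMeasurable f μ) (hg : AEMeasurable g ν) :
    tvDist (μ.map f) (ν.map g) ≤ μ.real univ + ν.real univ := by
  simpa only [measureReal_def, Measure.map_apply_of_aemeasurable hf MeasurableSet.univ,
    Measure.map_apply_of_aemeasurable hg MeasurableSet.univ, preimage_univ]
    using tvDist_le (μ.map f) (ν.map g)

end TotalVariation

namespace MeasureTheory.Measure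

variable {α β : Type*} [MeasurableSpace α] [MeasurableSpace β] {μ : Measure α}
  {κ : α → Measure β}

lemma bind_ne_zero (hκ : AEMeasurable κ μ) (hμ : μ ≠ 0) (h : ∀ᵐ a ∂μ, κ a ≠ 0) :
    μ.bind κ ≠ 0 := by
  intro h0
  have hmeas : AEMeasurable (fun a => κ a univ) μ :=
    (measurable_coe MeasurableSet.univ).comp_aemeasurable hκ
  have hint : ∫⁻ a, κ a univ ∂μ = 0 := by
    rw [← bind_apply MeasurableSet.univ hκ, h0, coe_zero, Pi.zero_apply]
  rw [lintegral_eq_zero_iff' hmeas] at hint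
  have := ae_neBot.2 hμ
  obtain ⟨a, ha, ha0⟩ := (h.and hint).exists
  exact ha (measure_univ_eq_zero.1 ha0)

lemma ae_bind_of_ae_ae {p : β → Prop} (hκ : AEMeasurable κ μ) (hp : MeasurableSet {b | p b})
    (h : ∀ᵐ a ∂μ, ∀ᵐ b ∂κ a, p b) : ∀ᵐ b ∂μ.bind κ, p b := by
  have hmeas : AEMeasurable (fun a => κ a {b | ¬p b}) μ :=
    (measurable_coe hp.compl).comp_aemeasurable hκ
  rw [ae_iff, bind_apply (s := {b | ¬p b}) hp.compl hκ, lintegral_eq_zero_iff' hmeas]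
  exact h

end MeasureTheory.Measure

section AlmostSureConvergence

variable {Ω : Type*} [MeasurableSpace Ω] {P : Measure Ω} [IsFiniteMeasure P]

lemma tendsto_measureReal_iUnion_atTop {s : ℕ → Set Ω} (hs : Monotone s) :
    Tendsto (fun n => P.real (s n)) atTop (𝓝 (P.real (⋃ n, s n))) :=
  (ENNReal.tendsto_toReal (measure_ne_top P _)).comp (tendsto_measure_iUnion_atTop hs)

lemma exists_lt_measureReal_setOf_lt {Z : Ω → ℝ} {t x : ℝ}
    (hx : x < P.real {ω | t < Z ω}) : ∃ s, t < s ∧ x < P.real {ω | s < Z ω} := by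
  obtain ⟨u, hu_anti, hu_gt, hu⟩ := exists_seq_strictAnti_tendsto t
  have hmono : Monotone fun j => {ω | u j < Z ω} :=
    fun i j hij ω hω => (hu_anti.antitone hij).trans_lt hω
  have hunion : (⋃ j, {ω | u j < Z ω}) = {ω | t < Z ω} := by
    ext ω
    simp only [mem_iUnion]
    exact ⟨fun ⟨j, hj⟩ => (hu_gt j).trans hj,
      fun hω => (hu.eventually (gt_mem_nhds hω)).exists⟩
  rw [← hunion] at hx
  obtain ⟨j, hj⟩ :=
    ((tendsto_measureReal_iUnion_atTop hmono).eventually (lt_mem_nhds hx)).exists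
  exact ⟨u j, hu_gt j, hj⟩

variable {Y : ℕ → Ω → ℝ} {Z : Ω → ℝ}

lemma eventually_lt_measureReal_of_ae_tendsto
    (hYZ : ∀ᵐ ω ∂P, Tendsto (fun n => Y n ω) atTop (𝓝 (Z ω))) {s x : ℝ}
    (hx : x < P.real {ω | s < Z ω}) : ∀ᶠ n in atTop, x < P.real {ω | s < Y n ω} := by
  set C : ℕ → Set Ω := fun N => {ω | ∀ n ≥ N, s < Y n ω}
  have hmono : Monotone C := fun N M hNM ω hω n hn => hω n (hNM.trans hn)
  have hsub : {ω | s < Z ω} ≤ᵐ[P] ⋃ N, C N := by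
    filter_upwards [hYZ] with ω hω hs
    exact mem_iUnion.2 (eventually_atTop.1 (hω.eventually (lt_mem_nhds hs)))
  have hx' : x < P.real (⋃ N, C N) :=
    hx.trans_le (ENNReal.toReal_mono (measure_ne_top P _) (measure_mono_ae hsub))
  filter_upwards [(tendsto_measureReal_iUnion_atTop hmono).eventually (lt_mem_nhds hx')]
    with N hN
  exact hN.trans_le (measureReal_mono fun ω hω => hω N le_rfl)

lemma eventually_measureReal_lt_of_ae_tendsto (hY : ∀ᶠ n in atTop, AEMeasurable (Y n) P)
    (hYZ : ∀ᵐ ω ∂P, Tendsto (fun n => Y n ω) atTop (𝓝 (Z ω))) {s y : ℝ}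
    (hy : P.real {ω | s ≤ Z ω} < y) : ∀ᶠ n in atTop, P.real {ω | s < Y n ω} < y := by
  obtain ⟨N₀, hN₀⟩ := eventually_atTop.1 hY
  set D : ℕ → Set Ω := fun N => ⋃ n ≥ max N N₀, {ω | s < Y n ω}
  have hanti : Antitone D := fun N M hNM =>
    biUnion_mono (fun n hn => (max_le_max_right N₀ hNM).trans hn) fun _ _ => Subset.rfl
  have hmeas : ∀ N, NullMeasurableSet (D N) P := fun N =>
    .biUnion (to_countable _) fun n hn =>
      nullMeasurableSet_lt aemeasurable_const (hN₀ n ((le_max_right N N₀).trans hn))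
  have hsub : ⋂ N, D N ≤ᵐ[P] {ω | s ≤ Z ω} := by
    filter_upwards [hYZ] with ω hω hD
    refine le_of_not_gt fun hZ => ?_
    obtain ⟨N, hN⟩ := eventually_atTop.1 (hω.eventually (gt_mem_nhds hZ))
    obtain ⟨n, hn, hs⟩ := mem_iUnion₂.1 (mem_iInter.1 hD N)
    exact (hN n ((le_max_left N N₀).trans hn)).not_gt hs
  have hlim : Tendsto (fun N => P.real (D N)) atTop (𝓝 (P.real (⋂ N, D N))) :=
    (ENNReal.tendsto_toReal (measure_ne_top P _)).comp
      (tendsto_measure_iInter_atTop hmeas hanti ⟨0, measure_ne_top P _⟩)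
  have hy' : P.real (⋂ N, D N) < y :=
    (ENNReal.toReal_mono (measure_ne_top P _) (measure_mono_ae hsub)).trans_lt hy
  filter_upwards [hlim.eventually (gt_mem_nhds hy'), eventually_ge_atTop N₀] with N hN hN₀N
  exact (measureReal_mono (fun ω hω => mem_iUnion₂.2 ⟨N, by simp [hN₀N], hω⟩)
    (measure_ne_top P _)).trans_lt hN

end AlmostSureConvergence

lemma sub_le_limsup_of_eventually {ι : Type*} {l : Filter ι} [l.NeBot] {a b d : ι → ℝ}
    {p q : ℝ}
    (ha : ∀ x < p, ∀ᶠ i in l, x < a i) (hb : ∀ y > q, ∀ᶠ i in l, b i < y)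
    (hd : ∀ᶠ i in l, a i - b i ≤ d i) (hbdd : IsBoundedUnder (· ≤ ·) l d) :
    p - q ≤ limsup d l := by
  refine le_of_forall_pos_le_add fun ε hε => ?_
  have h : ∀ᶠ i in l, p - q - ε ≤ d i := by
    filter_upwards [ha (p - ε / 2) (by linarith), hb (q + ε / 2) (by linarith), hd]
      with i hai hbi hdi
    linarith
  linarith [le_limsup_of_frequently_le h.frequently hbdd]

lemma neighborSet_addEdge_subset (G : SimpleGraph ℕ) (u v w : ℕ) :
    (addEdge G u v).neighborSet w ⊆ insert u (insert v (G.neighborSet w)) := by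
  intro x hx
  simp only [addEdge, SimpleGraph.mem_neighborSet, SimpleGraph.sup_adj,
    SimpleGraph.fromEdgeSet_adj, mem_singleton_iff, Sym2.eq_iff] at hx
  simp only [mem_insert_iff, SimpleGraph.mem_neighborSet]
  tauto

lemma degN_addEdge_pos {G : SimpleGraph ℕ} {w : ℕ} (hw : 0 < degN G w) (u v : ℕ) :
    0 < degN (addEdge G u v) w := by
  have hfin : (G.neighborSet w).Finite := finite_of_ncard_pos hw
  rw [degN, ncard_pos (((hfin.insert v).insert u).subset (neighborSet_addEdge_subset G u v w))]
  exact (nonempty_of_ncard_ne_zero hw.ne').mono (SimpleGraph.neighborSet_mono le_sup_left w)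

lemma paStep_ne_zero {n : ℕ} {G : SimpleGraph ℕ} {w : ℕ} (hw : 0 < degN G w) :
    paStep n G ≠ 0 := by
  rw [paStep, Ne, Measure.sum_eq_zero, not_forall]
  refine ⟨w, fun h => ?_⟩
  simpa [hw.ne', ENNReal.mul_eq_top] using congrArg (· univ) h

lemma ae_paStep {n : ℕ} {G : SimpleGraph ℕ} {w : ℕ} (hw : 0 < degN G w) :
    ∀ᵐ H ∂paStep n G, ∃ w, 0 < degN H w := by
  rw [paStep, Measure.ae_sum_iff' MeasurableSpace.measurableSet_top]
  exact fun v => Measure.ae_smul_measure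
    ((ae_dirac_iff MeasurableSpace.measurableSet_top).2 ⟨w, degN_addEdge_pos hw n v⟩) _

lemma PAlawAux_ne_zero_and_ae {k : ℕ} {T : SimpleGraph ℕ} (hT : ∃ w, 0 < degN T w) (m : ℕ) :
    PAlawAux k T m ≠ 0 ∧ ∀ᵐ G ∂PAlawAux k T m, ∃ w, 0 < degN G w := by
  induction m with
  | zero => exact ⟨Measure.dirac_ne_zero, (ae_dirac_iff MeasurableSpace.measurableSet_top).2 hT⟩
  | succ m ih =>
    obtain ⟨hne, hae⟩ := ih
    have hκ : AEMeasurable (paStep (k + m)) (PAlawAux k T m) := measurable_from_top.aemeasurable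
    exact ⟨Measure.bind_ne_zero hκ hne (hae.mono fun G ⟨_, hw⟩ => paStep_ne_zero hw),
      Measure.ae_bind_of_ae_ae hκ MeasurableSpace.measurableSet_top
        (hae.mono fun G ⟨_, hw⟩ => ae_paStep hw)⟩

lemma IsTreeOn.exists_degN_pos {k : ℕ} {T : SimpleGraph ℕ} (hk : 2 ≤ k) (hT : IsTreeOn k T) :
    ∃ w, 0 < degN T w := by
  obtain ⟨hbd, htree⟩ := hT
  have hfin : (T.neighborSet 0).Finite := (finite_lt_nat k).subset fun w hw => (hbd 0 w hw).2
  have hreach := htree.connected.preconnected (⟨0, by simp; omega⟩ : {v : ℕ | v < k})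
    ⟨1, by simp; omega⟩
  obtain ⟨⟨x, _⟩, hx⟩ := hreach.nonempty_neighborSet_left (by simp)
  exact ⟨0, (ncard_pos hfin).2 ⟨x, hx⟩⟩

lemma PAlaw_ne_zero {k : ℕ} {T : SimpleGraph ℕ} (hk : 2 ≤ k) (hT : IsTreeOn k T) (n : ℕ) :
    PAlaw k T n ≠ 0 :=
  (PAlawAux_ne_zero_and_ae (hT.exists_degN_pos hk) _).1

lemma aemeasurable_of_map_eq_PAlaw {k n : ℕ} {T : SimpleGraph ℕ} {Ω : Type*}
    [MeasurableSpace Ω] {P : Measure Ω} {X : Ω → SimpleGraph ℕ} (hk : 2 ≤ k)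
    (hT : IsTreeOn k T)
    (h : P.map X = PAlaw k T n) : AEMeasurable X P :=
  aemeasurable_of_map_neZero ⟨h ▸ PAlaw_ne_zero hk hT n⟩

lemma degN_iso {G H : SimpleGraph ℕ} (e : G ≃g H) (v : ℕ) : degN H (e v) = degN G v := by
  rw [degN, degN, ← Nat.card_coe_set_eq, ← Nat.card_coe_set_eq]
  exact (Nat.card_congr (e.mapNeighborSet v)).symm

lemma maxDeg_iso {G H : SimpleGraph ℕ} (e : G ≃g H) : maxDeg G = maxDeg H := by
  simp only [maxDeg, ← degN_iso e]
  exact e.surjective.iSup_comp (degN H)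

lemma preimage_image_mk_preimage_maxDeg (A : Set ℕ) :
    Quotient.mk graphSetoid ⁻¹' (Quotient.mk graphSetoid '' (maxDeg ⁻¹' A)) =
      maxDeg ⁻¹' A := by
  refine Subset.antisymm ?_ (subset_preimage_image _ _)
  rintro G ⟨H, hH, hHG⟩
  obtain ⟨e⟩ := Quotient.exact hHG
  rwa [mem_preimage, ← maxDeg_iso e]

lemma measurable_mk_graphSetoid :
    Measurable (Quotient.mk graphSetoid : SimpleGraph ℕ → GraphType) :=
  measurable_from_top

lemma PAtype_eq_map {k n : ℕ} {T : SimpleGraph ℕ} {Ω : Type*} [MeasurableSpace Ω]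
    {P : Measure Ω} {X : Ω → SimpleGraph ℕ} (hX : AEMeasurable X P)
    (h : P.map X = PAlaw k T n) :
    PAtype k T n = P.map ((Quotient.mk graphSetoid : SimpleGraph ℕ → GraphType) ∘ X) := by
  rw [PAtype, ← h]
  exact measurable_mk_graphSetoid.aemeasurable.map_map_of_aemeasurable hX

section Coupling

variable {kS kT n : ℕ} {S T : SimpleGraph ℕ} {ΩS ΩT : Type*} [MeasurableSpace ΩS]
  [MeasurableSpace ΩT] {PS : Measure ΩS} {PT : Measure ΩT} [IsFiniteMeasure PS]
  [IsFiniteMeasure PT] {XS : ΩS → SimpleGraph ℕ} {XT : ΩT → SimpleGraph ℕ}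

lemma tvDist_PAtype_le (hXSm : AEMeasurable XS PS) (hXS : PS.map XS = PAlaw kS S n)
    (hXTm : AEMeasurable XT PT) (hXT : PT.map XT = PAlaw kT T n) :
    tvDist (PAtype kS S n) (PAtype kT T n) ≤ PS.real univ + PT.real univ := by
  rw [PAtype_eq_map hXSm hXS, PAtype_eq_map hXTm hXT]
  exact tvDist_map_le PS PT (measurable_mk_graphSetoid.comp_aemeasurable hXSm)
    (measurable_mk_graphSetoid.comp_aemeasurable hXTm)

lemma measureReal_maxDeg_mem_sub_le_tvDist_PAtype (hXSm : AEMeasurable XS PS)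
    (hXS : PS.map XS = PAlaw kS S n) (hXTm : AEMeasurable XT PT)
    (hXT : PT.map XT = PAlaw kT T n) (A : Set ℕ) :
    PS.real {ω | maxDeg (XS ω) ∈ A} - PT.real {ω | maxDeg (XT ω) ∈ A} ≤
      tvDist (PAtype kS S n) (PAtype kT T n) := by
  rw [PAtype_eq_map hXSm hXS, PAtype_eq_map hXTm hXT]
  have h := measureReal_preimage_sub_le_tvDist_map PS PT
    (measurable_mk_graphSetoid.comp_aemeasurable hXSm)
    (measurable_mk_graphSetoid.comp_aemeasurable hXTm)
    (MeasurableSpace.measurableSet_top (s := Quotient.mk graphSetoid '' (maxDeg ⁻¹' A)))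
  rwa [preimage_comp, preimage_comp, preimage_image_mk_preimage_maxDeg] at h

end Coupling

/-- `δ(S,T) ≥ sup_{t>0} [P(D_max(S) > t) - P(D_max(T) > t)]`, where `D_max(S)` (resp.
`D_max(T)`) is the a.s. limit of `Δ(PA(n,S))/√n` (resp. `Δ(PA(n,T))/√n`). -/
theorem delta_ge_max_degree_tail_difference
    (kS kT : ℕ) (hkS : 2 ≤ kS) (hkT : 2 ≤ kT)
    (S T : SimpleGraph ℕ) (hS : IsTreeOn kS S) (hT : IsTreeOn kT T)
    {ΩS : Type} [MeasurableSpace ΩS] (PS : Measure ΩS) [IsProbabilityMeasure PS]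
    {ΩT : Type} [MeasurableSpace ΩT] (PT : Measure ΩT) [IsProbabilityMeasure PT]
    (XS : ℕ → ΩS → SimpleGraph ℕ) (XT : ℕ → ΩT → SimpleGraph ℕ)
    (hXS : ∀ n : ℕ, kS ≤ n → PS.map (XS n) = PAlaw kS S n)
    (hXT : ∀ n : ℕ, kT ≤ n → PT.map (XT n) = PAlaw kT T n)
    (DmaxS : ΩS → ℝ) (DmaxT : ΩT → ℝ)
    (hDS : ∀ᵐ ω ∂PS,
      Filter.Tendsto (fun n : ℕ => (maxDeg (XS n ω) : ℝ) / Real.sqrt n)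
        Filter.atTop (nhds (DmaxS ω)))
    (hDT : ∀ᵐ ω ∂PT,
      Filter.Tendsto (fun n : ℕ => (maxDeg (XT n ω) : ℝ) / Real.sqrt n)
        Filter.atTop (nhds (DmaxT ω))) :
    ∀ t : ℝ, 0 < t →
      (PS {ω | t < DmaxS ω}).toReal - (PT {ω | t < DmaxT ω}).toReal ≤
        deltaPA kS S kT T := by
  intro t _
  rw [← measureReal_def, ← measureReal_def]
  have hXSm : ∀ n, kS ≤ n → AEMeasurable (XS n) PS :=
    fun n hn => aemeasurable_of_map_eq_PAlaw hkS hS (hXS n hn)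
  have hXTm : ∀ n, kT ≤ n → AEMeasurable (XT n) PT :=
    fun n hn => aemeasurable_of_map_eq_PAlaw hkT hT (hXT n hn)
  have hlarge : ∀ᶠ n in atTop, kS ≤ n ∧ kT ≤ n :=
    (eventually_ge_atTop kS).and (eventually_ge_atTop kT)
  have hbdd : IsBoundedUnder (· ≤ ·) atTop fun n => tvDist (PAtype kS S n) (PAtype kT T n) :=
    isBoundedUnder_of_eventually_le <| hlarge.mono fun n ⟨hnS, hnT⟩ =>
      tvDist_PAtype_le (hXSm n hnS) (hXS n hnS) (hXTm n hnT) (hXT n hnT)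
  have hYT : ∀ᶠ n in atTop, AEMeasurable (fun ω => (maxDeg (XT n ω) : ℝ) / √n) PT :=
    (eventually_ge_atTop kT).mono fun n hn =>
      (measurable_from_top (f := fun G : SimpleGraph ℕ => (maxDeg G : ℝ) / √n))
        |>.comp_aemeasurable (hXTm n hn)
  have key : ∀ s, t < s →
      PS.real {ω | s < DmaxS ω} - PT.real {ω | t < DmaxT ω} ≤ deltaPA kS S kT T :=
    fun s hts =>
      sub_le_limsup_of_eventually (fun x hx => eventually_lt_measureReal_of_ae_tendsto hDS hx)
        (fun y hy => eventually_measureReal_lt_of_ae_tendsto hYT hDT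
          ((measureReal_mono fun ω hω => hts.trans_le hω).trans_lt hy))
        (hlarge.mono fun n ⟨hnS, hnT⟩ => measureReal_maxDeg_mem_sub_le_tvDist_PAtype
          (hXSm n hnS) (hXS n hnS) (hXTm n hnT) (hXT n hnT) {m : ℕ | s < m / √n}) hbdd
  refine le_of_forall_lt fun c hc => ?_
  obtain ⟨s, hts, hs⟩ := exists_lt_measureReal_setOf_lt (P := PS) (Z := DmaxS)
    (x := c + PT.real {ω | t < DmaxT ω}) (by linarith)
  linarith [key s hts]

end
end

section
/- Fix positive integers a and b. Let B and Z be independent random variables with B ∼ Beta(a,b) and Z ∼ GGa(a+b+1, 2), and set V = 2BZ. Then for every t > 0, P(V > t) = (2^{−(a+b)} / Γ((a+b+1)/2)) · Σ_{j=0}^{a−1} Σ_{k=0}^{a+b−1−j} C(a+b−1, j) C(a+b−1−j, k) (−1)^{a+b−1−j−k} t^{a+b−1−k} A_{k+1}, where A_m = ∫_t^∞ y^m exp(−y²/4) dy and C(n,k) denotes a binomial coefficient. -/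
/-!
Conditioning on `Z = z`, the event `2BZ > t` becomes `B > u` with `u = t / (2z)`. For integer
parameters the Beta tail is a binomial lower tail, `P(B > u) = P(Bin(a + b - 1, u) < a)`: both
sides vanish at `u = 1` and their derivatives agree because the derivative of the binomial sum
telescopes. Multiplying by `(2z)^(a+b-1)` turns the `j`-th binomial term into
`C(n, j) t^j (2z - t)^(n-j)` with `n = a + b - 1`, so the `GGa` integral splits into integrals of
`z exp(-z²) (2z - t)^m` over `z > t/2`; the substitution `y = 2z` and the binomial expansion of
`(y - t)^m` write these in terms of the `A_{k+1}`.
-/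

open MeasureTheory Filter Real
open scoped ENNReal

noncomputable section

/-- The beta distribution `Beta(a, b)`, with density proportional to
`x^(a-1) (1-x)^(b-1)` on `[0, 1]`. -/
def betaMeasure (a b : ℝ) : Measure ℝ :=
  volume.withDensity fun x =>
    ENNReal.ofReal (if 0 < x ∧ x < 1 then
      (Real.Gamma (a + b) / (Real.Gamma a * Real.Gamma b)) * x ^ (a - 1) * (1 - x) ^ (b - 1)
    else 0)

/-- The generalized gamma distribution `GGa(a, b)`, with density proportional to
`x^(a-1) exp(-x^b)` on `(0, ∞)`. -/
def ggaMeasure (a b : ℝ) : Measure ℝ :=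
  volume.withDensity fun x =>
    ENNReal.ofReal (if 0 < x then
      (b / Real.Gamma (a / b)) * x ^ (a - 1) * Real.exp (-(x ^ b))
    else 0)

/-- `A_m = ∫_t^∞ y^m exp(-y²/4) dy`. -/
def Aint (t : ℝ) (m : ℕ) : ℝ := ∫ y in Set.Ioi t, y ^ m * Real.exp (-y ^ 2 / 4)

section Binomial

open Finset

/-- `binomialLowerTail n a u` is the probability that a `Binomial(n, u)` variable is `< a`. -/
def binomialLowerTail (n a : ℕ) (u : ℝ) : ℝ :=
  ∑ j ∈ range a, (n.choose j : ℝ) * u ^ j * (1 - u) ^ (n - j)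

theorem hasDerivAt_binomialLowerTail (n a : ℕ) (u : ℝ) :
    HasDerivAt (binomialLowerTail n a)
      (-((n.choose a * a : ℝ) * u ^ (a - 1) * (1 - u) ^ (n - a))) u := by
  set D : ℕ → ℝ := fun j => (n.choose j * j : ℝ) * u ^ (j - 1) * (1 - u) ^ (n - j)
  -- the derivative of the `j`-th term is `D j - D (j + 1)`, so the sum telescopes
  have hterm (j : ℕ) : HasDerivAt (fun u : ℝ => (n.choose j : ℝ) * u ^ j * (1 - u) ^ (n - j))
      (D j - D (j + 1)) u := by
    refine (((hasDerivAt_pow j u).const_mul _).mul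
      (((hasDerivAt_id' u).const_sub 1).fun_pow (n - j))).congr_deriv ?_
    have hc : (n.choose (j + 1) * (j + 1 : ℕ) : ℝ) = n.choose j * (n - j : ℕ) := by
      exact_mod_cast Nat.choose_succ_right_eq n j
    simp only [D, Nat.add_sub_cancel, Nat.sub_sub, hc]
    ring
  refine (HasDerivAt.fun_sum (u := range a) fun j _ => hterm j).congr_deriv ?_
  rw [sum_range_sub']
  simp [D]

theorem binomialLowerTail_one {n a : ℕ} (h : a ≤ n) : binomialLowerTail n a 1 = 0 :=
  sum_eq_zero fun j hj => by simp [Nat.sub_ne_zero_of_lt ((mem_range.1 hj).trans_le h)]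

theorem binomialLowerTail_zero (n : ℕ) {a : ℕ} (ha : 0 < a) : binomialLowerTail n a 0 = 1 := by
  obtain ⟨a, rfl⟩ := Nat.exists_eq_add_one_of_ne_zero ha.ne'
  simp [binomialLowerTail, sum_range_succ']

theorem binomialLowerTail_nonneg (n a : ℕ) {u : ℝ} (hu0 : 0 ≤ u) (hu1 : u ≤ 1) :
    0 ≤ binomialLowerTail n a u :=
  sum_nonneg fun j _ => by have : 0 ≤ 1 - u := sub_nonneg.2 hu1; positivity

theorem continuous_binomialLowerTail (n a : ℕ) : Continuous (binomialLowerTail n a) := by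
  unfold binomialLowerTail; fun_prop

theorem integral_choose_mul_pow_mul_one_sub_pow {n a : ℕ} (h : a ≤ n) (u : ℝ) :
    ∫ x in u..1, (n.choose a * a : ℝ) * x ^ (a - 1) * (1 - x) ^ (n - a) =
      binomialLowerTail n a u := by
  have := intervalIntegral.integral_eq_sub_of_hasDerivAt
    (fun x _ => (hasDerivAt_binomialLowerTail n a x).neg)
    ((by fun_prop : Continuous fun x : ℝ =>
      -(-((n.choose a * a : ℝ) * x ^ (a - 1) * (1 - x) ^ (n - a)))).intervalIntegrable u 1)
  simpa [binomialLowerTail_one h] using this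

theorem pow_mul_binomialLowerTail_div (n a : ℕ) {w : ℝ} (hw : w ≠ 0) (t : ℝ) :
    w ^ n * binomialLowerTail n a (t / w) =
      ∑ j ∈ range a, (n.choose j : ℝ) * t ^ j * (w - t) ^ (n - j) := by
  rw [binomialLowerTail, mul_sum]
  refine sum_congr rfl fun j _ => ?_
  rcases le_or_gt j n with hj | hj
  · rw [one_sub_div hw, div_pow, div_pow, ← Nat.add_sub_cancel' hj]
    field_simp
    simp only [Nat.add_sub_cancel_left]
    ring
  · simp [Nat.choose_eq_zero_of_lt hj]

end Binomial

section Beta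

open Set
open scoped Nat

variable {a b : ℕ}

theorem Gamma_add_div_Gamma_mul_Gamma_natCast (ha : 0 < a) (hb : 0 < b) :
    Gamma (a + b) / (Gamma a * Gamma b) = ((a + b - 1).choose a * a : ℝ) := by
  obtain ⟨a, rfl⟩ := Nat.exists_eq_add_one_of_ne_zero ha.ne'
  obtain ⟨b, rfl⟩ := Nat.exists_eq_add_one_of_ne_zero hb.ne'
  have hfac : ((a + b + 1).choose (a + 1) * (a + 1) * (a ! * b !) : ℝ) = (a + b + 1)! := by
    rw [← Nat.choose_mul_factorial_mul_factorial (n := a + b + 1) (k := a + 1) (by omega),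
      show a + b + 1 - (a + 1) = b by omega, Nat.factorial_succ]
    push_cast
    ring
  rw [show a + 1 + (b + 1) - 1 = a + b + 1 by omega,
    show ((a + 1 : ℕ) : ℝ) + (b + 1 : ℕ) = ((a + b + 1 : ℕ) : ℝ) + 1 by push_cast; ring,
    Nat.cast_succ a, Nat.cast_succ b, Gamma_nat_eq_factorial, Gamma_nat_eq_factorial,
    Gamma_nat_eq_factorial, ← hfac]
  field_simp

theorem betaMeasure_natCast_eq (ha : 0 < a) (hb : 0 < b) :
    betaMeasure a b = (volume.restrict (Ioo 0 1)).withDensity fun x =>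
      ENNReal.ofReal (((a + b - 1).choose a * a : ℝ) * x ^ (a - 1) * (1 - x) ^ (b - 1)) := by
  rw [betaMeasure, ← withDensity_indicator measurableSet_Ioo]
  congr 1
  funext x
  by_cases hx : x ∈ Ioo 0 1
  · rw [indicator_of_mem hx, if_pos (show 0 < x ∧ x < 1 from hx),
      Gamma_add_div_Gamma_mul_Gamma_natCast ha hb, ← Nat.cast_pred ha, ← Nat.cast_pred hb,
      rpow_natCast, rpow_natCast]
  · rw [indicator_of_notMem hx, if_neg (show ¬(0 < x ∧ x < 1) from hx), ENNReal.ofReal_zero]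

theorem betaMeasure_Ioi (ha : 0 < a) (hb : 0 < b) {u : ℝ} (hu0 : 0 ≤ u) (hu1 : u ≤ 1) :
    betaMeasure a b (Ioi u) = ENNReal.ofReal (binomialLowerTail (a + b - 1) a u) := by
  have hdens : Continuous fun x : ℝ =>
      ((a + b - 1).choose a * a : ℝ) * x ^ (a - 1) * (1 - x) ^ (b - 1) := by fun_prop
  rw [betaMeasure_natCast_eq ha hb, withDensity_apply _ measurableSet_Ioi,
    Measure.restrict_restrict measurableSet_Ioi, Ioi_inter_Ioo, max_eq_left hu0,
    ← ofReal_integral_eq_lintegral_ofReal (hdens.integrableOn_Icc.mono_set Ioo_subset_Icc_self),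
    ← integral_Ioc_eq_integral_Ioo, ← intervalIntegral.integral_of_le hu1,
    show b - 1 = a + b - 1 - a by omega,
    integral_choose_mul_pow_mul_one_sub_pow (by omega)]
  filter_upwards [ae_restrict_mem measurableSet_Ioo] with x hx
  have : 0 ≤ 1 - x := sub_nonneg.2 hx.2.le
  have : 0 ≤ x := hu0.trans hx.1.le
  positivity

theorem betaMeasure_natCast_ne_zero (ha : 0 < a) (hb : 0 < b) : betaMeasure a b ≠ 0 := by
  intro h
  simpa [h, binomialLowerTail_zero _ ha] using betaMeasure_Ioi ha hb le_rfl zero_le_one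

theorem betaMeasure_setOf_lt_mul_mul (ha : 0 < a) (hb : 0 < b) {t c : ℝ} (ht : 0 < t)
    (hc : 0 < c) (z : ℝ) :
    betaMeasure a b {x | t < c * x * z} = ENNReal.ofReal
      ((Ioi (t / c)).indicator (fun z => binomialLowerTail (a + b - 1) a (t / (c * z))) z) := by
  by_cases hz : t / c < z
  · have hcz : t < c * z := by rwa [div_lt_iff₀' hc] at hz
    have hz0 : 0 < z := (div_pos ht hc).trans hz
    have hset : {x | t < c * x * z} = Ioi (t / (c * z)) := by
      ext x
      rw [mem_ofPred_eq, mem_Ioi, div_lt_iff₀ (by positivity), mul_right_comm, mul_comm x]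
    rw [hset, indicator_of_mem (mem_Ioi.2 hz), betaMeasure_Ioi ha hb (by positivity)
      ((div_le_one (by positivity)).2 hcz.le)]
  · have hcz : c * z ≤ t := by rwa [not_lt, le_div_iff₀' hc] at hz
    have hset : {x | t < c * x * z} ∩ Ioo 0 1 = ∅ := by
      refine eq_empty_of_forall_notMem fun x ⟨hxt, hx0, hx1⟩ => ?_
      rw [mem_ofPred_eq] at hxt
      nlinarith
    have hmeas : MeasurableSet {x | t < c * x * z} :=
      measurableSet_lt measurable_const (by fun_prop)
    rw [indicator_of_notMem (notMem_Ioi.2 (not_lt.1 hz)), ENNReal.ofReal_zero,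
      betaMeasure_natCast_eq ha hb, withDensity_apply _ hmeas, Measure.restrict_restrict hmeas,
      hset, Measure.restrict_empty, lintegral_zero_measure]

end Beta

section GaussianMoments

open Set Finset

theorem integrableOn_Ioi_pow_mul_exp_neg_mul_sq {b s : ℝ} (hb : 0 < b) (hs : 0 ≤ s) (m : ℕ) :
    IntegrableOn (fun y : ℝ => y ^ m * exp (-b * y ^ 2)) (Ioi s) := by
  simpa only [rpow_natCast] using (integrableOn_rpow_mul_exp_neg_mul_sq hb
    (by linarith [m.cast_nonneg (α := ℝ)] : (-1 : ℝ) < m)).mono_set (Ioi_subset_Ioi hs)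

theorem integrableOn_Ioi_mul_exp_neg_sq_mul_two_mul_sub_pow {t : ℝ} (ht : 0 ≤ t) (m : ℕ) :
    IntegrableOn (fun z : ℝ => z * exp (-z ^ 2) * (2 * z - t) ^ m) (Ioi (t / 2)) := by
  refine ((integrableOn_Ioi_pow_mul_exp_neg_mul_sq one_pos (by positivity) (m + 1)).const_mul
    (2 ^ m)).mono' (by fun_prop) ?_
  filter_upwards [ae_restrict_mem measurableSet_Ioi] with z hz
  have hz' : 0 ≤ 2 * z - t := by linarith [mem_Ioi.1 hz]
  have hz0 : 0 ≤ z := by linarith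
  rw [norm_of_nonneg (by positivity), neg_mul, one_mul]
  calc z * exp (-z ^ 2) * (2 * z - t) ^ m
      ≤ z * exp (-z ^ 2) * (2 * z) ^ m := by gcongr; linarith
    _ = 2 ^ m * (z ^ (m + 1) * exp (-z ^ 2)) := by ring

theorem integral_Ioi_mul_exp_neg_sq_mul_two_mul_sub_pow {t : ℝ} (ht : 0 ≤ t) (m : ℕ) :
    ∫ z in Ioi (t / 2), z * exp (-z ^ 2) * (2 * z - t) ^ m =
      (∑ k ∈ range (m + 1), (m.choose k : ℝ) * (-1) ^ (m - k) * t ^ (m - k) * Aint t (k + 1)) /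
        4 := by
  set g : ℝ → ℝ := fun y => y * exp (-y ^ 2 / 4) * (y - t) ^ m / 2
  have hsubst : (fun z => z * exp (-z ^ 2) * (2 * z - t) ^ m) = fun z => g (2 * z) := by
    funext z
    simp only [g, show -(2 * z) ^ 2 / 4 = -z ^ 2 by ring]
    ring
  have hexpand (y : ℝ) : y * exp (-y ^ 2 / 4) * (y - t) ^ m / 2 =
      ∑ k ∈ range (m + 1), (m.choose k : ℝ) * (-1) ^ (m - k) * t ^ (m - k) / 2 *
        (y ^ (k + 1) * exp (-y ^ 2 / 4)) := by
    rw [sub_eq_add_neg, add_pow, mul_sum, sum_div]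
    refine sum_congr rfl fun k _ => ?_
    rw [neg_pow]
    ring
  have hint (k : ℕ) : IntegrableOn (fun y : ℝ => y ^ (k + 1) * exp (-y ^ 2 / 4)) (Ioi t) := by
    simpa only [neg_mul, ← neg_div, one_div, ← div_eq_inv_mul] using
      integrableOn_Ioi_pow_mul_exp_neg_mul_sq (b := 1 / 4) (by norm_num) ht (k + 1)
  rw [hsubst, integral_comp_mul_left_Ioi g _ two_pos, show 2 * (t / 2) = t by ring]
  simp only [g, hexpand]
  rw [integral_finsetSum _ fun k _ => (hint k).const_mul _, smul_eq_mul, mul_sum, sum_div]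
  refine sum_congr rfl fun k _ => ?_
  rw [integral_const_mul, Aint]
  ring

end GaussianMoments

section TailIntegral

open Set Finset

theorem integral_Ioi_pow_mul_exp_neg_sq_mul_binomialLowerTail {t : ℝ} (ht : 0 ≤ t) {n a : ℕ}
    (ha : a ≤ n + 1) :
    ∫ z in Ioi (t / 2), z ^ (n + 1) * exp (-z ^ 2) * binomialLowerTail n a (t / (2 * z)) =
      (∑ j ∈ range a, ∑ k ∈ range (n + 1 - j), (n.choose j : ℝ) * ((n - j).choose k : ℝ) *
        (-1) ^ (n - j - k) * t ^ (n - k) * Aint t (k + 1)) / 2 ^ (n + 2) := by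
  have hexpand : EqOn
      (fun z => z ^ (n + 1) * exp (-z ^ 2) * binomialLowerTail n a (t / (2 * z)))
      (fun z => ∑ j ∈ range a, (n.choose j : ℝ) * t ^ j / 2 ^ n *
        (z * exp (-z ^ 2) * (2 * z - t) ^ (n - j))) (Ioi (t / 2)) := by
    intro z hz
    have hz0 : 0 < z := (div_nonneg ht two_pos.le).trans_lt hz
    calc z ^ (n + 1) * exp (-z ^ 2) * binomialLowerTail n a (t / (2 * z))
        = z * exp (-z ^ 2) * ((2 * z) ^ n * binomialLowerTail n a (t / (2 * z))) / 2 ^ n := by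
          field_simp
          ring
      _ = _ := by
          rw [pow_mul_binomialLowerTail_div n a (by positivity), mul_sum, sum_div]
          refine sum_congr rfl fun j _ => ?_
          ring
  rw [setIntegral_congr_fun measurableSet_Ioi hexpand, integral_finsetSum _ fun j _ =>
    (integrableOn_Ioi_mul_exp_neg_sq_mul_two_mul_sub_pow ht _).const_mul _, sum_div]
  refine sum_congr rfl fun j hj => ?_
  have hjn : j ≤ n := by have := mem_range.1 hj; omega
  rw [integral_const_mul, integral_Ioi_mul_exp_neg_sq_mul_two_mul_sub_pow ht,
    show n - j + 1 = n + 1 - j by omega, mul_div_assoc', mul_sum, sum_div, sum_div]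
  refine sum_congr rfl fun k hk => ?_
  have hkn : k ≤ n - j := by have := mem_range.1 hk; omega
  rw [show n - k = j + (n - j - k) by omega, pow_add]
  ring

end TailIntegral

section GeneralizedGamma

open Set

theorem withDensity_ne_zero_of_ne_zero_on {α : Type*} [MeasurableSpace α] {μ : Measure α}
    {f : α → ℝ≥0∞} (hf : AEMeasurable f μ) {s : Set α} (hs : μ s ≠ 0)
    (hfs : ∀ x ∈ s, f x ≠ 0) : μ.withDensity f ≠ 0 := by
  rw [Ne, withDensity_eq_zero_iff hf]
  exact fun h => hs (measure_mono_null hfs (ae_iff.1 h))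

theorem ggaMeasure_ne_zero {p q : ℝ} (hp : 0 < p) (hq : 0 < q) : ggaMeasure p q ≠ 0 := by
  refine withDensity_ne_zero_of_ne_zero_on
    (Measurable.ite measurableSet_Ioi (by fun_prop) measurable_const).ennreal_ofReal.aemeasurable
    (s := Ioi 0) (by simp) fun x hx => ?_
  have hΓ : 0 < Gamma (p / q) := Gamma_pos_of_pos (div_pos hp hq)
  have : 0 < x ^ (p - 1) := rpow_pos_of_pos hx _
  rw [if_pos (mem_Ioi.1 hx)]
  positivity

theorem toReal_lintegral_ggaMeasure_ofReal_indicator {p q s : ℝ} (hp : 0 < p) (hq : 0 < q)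
    (hs : 0 ≤ s) {g : ℝ → ℝ} (hg : Measurable g) (hg0 : ∀ z ∈ Ioi s, 0 ≤ g z) :
    (∫⁻ z, ENNReal.ofReal ((Ioi s).indicator g z) ∂ggaMeasure p q).toReal =
      ∫ z in Ioi s, q / Gamma (p / q) * z ^ (p - 1) * exp (-(z ^ q)) * g z := by
  have hΓ : 0 < Gamma (p / q) := Gamma_pos_of_pos (div_pos hp hq)
  have hmul (z : ℝ) : ENNReal.ofReal (if 0 < z then q / Gamma (p / q) * z ^ (p - 1) *
        exp (-(z ^ q)) else 0) * ENNReal.ofReal ((Ioi s).indicator g z) =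
      (Ioi s).indicator (fun z => ENNReal.ofReal
        (q / Gamma (p / q) * z ^ (p - 1) * exp (-(z ^ q)) * g z)) z := by
    by_cases hz : z ∈ Ioi s
    · rw [indicator_of_mem hz, indicator_of_mem hz, if_pos (hs.trans_lt hz),
        ENNReal.ofReal_mul' (hg0 z hz)]
    · rw [indicator_of_notMem hz, indicator_of_notMem hz, ENNReal.ofReal_zero, mul_zero]
  rw [ggaMeasure, lintegral_withDensity_eq_lintegral_mul _
    (Measurable.ite measurableSet_Ioi (by fun_prop) measurable_const).ennreal_ofReal
    (hg.indicator measurableSet_Ioi).ennreal_ofReal]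
  simp only [Pi.mul_apply, hmul]
  rw [lintegral_indicator measurableSet_Ioi, integral_eq_lintegral_of_nonneg_ae _ (by fun_prop)]
  filter_upwards [ae_restrict_mem measurableSet_Ioi] with z hz
  have : 0 < z ^ (p - 1) := rpow_pos_of_pos (hs.trans_lt hz) _
  have := hg0 z hz
  positivity

end GeneralizedGamma

theorem ProbabilityTheory.IndepFun.measure_setOf_mem_eq_lintegral {Ω α β : Type*}
    [MeasurableSpace Ω] [MeasurableSpace α] [MeasurableSpace β] {P : Measure Ω}
    [IsFiniteMeasure P] {X : Ω → α} {Y : Ω → β} (hXY : ProbabilityTheory.IndepFun X Y P)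
    (hX : AEMeasurable X P) (hY : AEMeasurable Y P) {s : Set (α × β)} (hs : MeasurableSet s) :
    P {ω | (X ω, Y ω) ∈ s} = ∫⁻ y, P.map X {x | (x, y) ∈ s} ∂P.map Y := by
  have h := Measure.map_apply_of_aemeasurable (hX.prodMk hY) hs
  rw [hXY.map_prod_eq_prod_map_map hX hY, Measure.prod_apply_symm hs] at h
  exact h.symm

/-- If `B ~ Beta(a, b)` and `Z ~ GGa(a+b+1, 2)` are independent and `V = 2BZ`, then for
every `t > 0`,
`P(V > t) = (2^{-(a+b)}/Γ((a+b+1)/2)) ∑_{j=0}^{a-1} ∑_{k=0}^{a+b-1-j} C(a+b-1,j) C(a+b-1-j,k)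
(-1)^{a+b-1-j-k} t^{a+b-1-k} A_{k+1}`, where `A_m = ∫_t^∞ y^m exp(-y²/4) dy`. -/
theorem tail_two_mul_beta_gga_alternating_sum
    (a b : ℕ) (ha : 0 < a) (hb : 0 < b)
    {Ω : Type} [MeasurableSpace Ω] (P : Measure Ω) [IsProbabilityMeasure P]
    (B Z : Ω → ℝ)
    (hind : ProbabilityTheory.IndepFun B Z P)
    (hB : P.map B = betaMeasure (a : ℝ) (b : ℝ))
    (hZ : P.map Z = ggaMeasure ((a : ℝ) + b + 1) 2) :
    ∀ t : ℝ, 0 < t →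
      (P {ω | t < 2 * B ω * Z ω}).toReal =
        (1 / (2 : ℝ) ^ (a + b) / Real.Gamma (((a : ℝ) + b + 1) / 2)) *
          ∑ j ∈ Finset.range a, ∑ k ∈ Finset.range (a + b - j),
            ((a + b - 1).choose j : ℝ) * ((a + b - 1 - j).choose k : ℝ) *
              (-1 : ℝ) ^ (a + b - 1 - j - k) * t ^ (a + b - 1 - k) * Aint t (k + 1) := by
  intro t ht
  have hBm : AEMeasurable B P := .of_map_ne_zero (hB ▸ betaMeasure_natCast_ne_zero ha hb)
  have hZm : AEMeasurable Z P :=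
    .of_map_ne_zero (hZ ▸ ggaMeasure_ne_zero (by positivity) two_pos)
  obtain ⟨n, hn⟩ : ∃ n, a + b = n + 1 := ⟨a + b - 1, by omega⟩
  have htail_nonneg (z : ℝ) (hz : t / 2 < z) : 0 ≤ binomialLowerTail n a (t / (2 * z)) :=
    binomialLowerTail_nonneg n a (div_nonneg ht.le (by linarith))
      ((div_le_one (by linarith)).2 (by linarith))
  have hdeg : (a : ℝ) + b + 1 - 1 = ((n + 1 : ℕ) : ℝ) := by rw [← hn]; push_cast; ring
  rw [hn, Nat.add_sub_cancel]
  calc (P {ω | t < 2 * B ω * Z ω}).toReal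
      = (∫⁻ z, betaMeasure a b {x | t < 2 * x * z} ∂ggaMeasure ((a : ℝ) + b + 1) 2).toReal := by
        rw [← hB, ← hZ]
        exact congrArg ENNReal.toReal (hind.measure_setOf_mem_eq_lintegral hBm hZm
          (s := {p | t < 2 * p.1 * p.2}) (measurableSet_lt measurable_const (by fun_prop)))
    _ = (∫⁻ z, ENNReal.ofReal ((Set.Ioi (t / 2)).indicator
          (fun z => binomialLowerTail n a (t / (2 * z))) z)
          ∂ggaMeasure ((a : ℝ) + b + 1) 2).toReal := by
        simp_rw [betaMeasure_setOf_lt_mul_mul ha hb ht two_pos, hn, Nat.add_sub_cancel]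
    _ = 2 / Gamma (((a : ℝ) + b + 1) / 2) * ∫ z in Set.Ioi (t / 2),
          z ^ (n + 1) * exp (-z ^ 2) * binomialLowerTail n a (t / (2 * z)) := by
        rw [toReal_lintegral_ggaMeasure_ofReal_indicator (by positivity) two_pos (by positivity)
          (g := fun z => binomialLowerTail n a (t / (2 * z)))
          ((continuous_binomialLowerTail n a).measurable.comp (by fun_prop)) htail_nonneg,
          ← integral_const_mul]
        refine setIntegral_congr_fun measurableSet_Ioi fun z _ => ?_
        simp only [hdeg, rpow_natCast, rpow_two]
        ring
    _ = _ := by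
        rw [integral_Ioi_pow_mul_exp_neg_sq_mul_binomialLowerTail ht.le (by omega)]
        ring

end
end

section
/- For all positive integers a and b and every integer j with 0 ≤ j ≤ a−1, Σ_{k=0}^{a+b−1−j} C(a+b−1−j, k) (−1)^{a+b−1−j−k} t^{a+b−1−k} ∫_t^∞ y^{k+1} exp(−y²/4) dy ∼ 2^{a+b−j} (a+b−1−j)! · t^{−(a+b−1−2j)} · exp(−t²/4) as t → ∞, where C(n,k) denotes a binomial coefficient and f(t) ∼ g(t) means f(t)/g(t) → 1. -/
/-! With `n = a + b - 1 - j`, the binomial theorem collapses the sum to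
`t ^ j * ∫_t^∞ y (y - t)^n exp(-y²/4) dy`. The substitution `y = t + 2v/t` rewrites this as
`2^(n+1) t^(j-n) exp(-t²/4) ∫_0^∞ (1 + 2εv) v^n exp(-v - εv²) dv` with `ε = t⁻²`, and as `ε → 0⁺`
the last integral tends to `∫_0^∞ v^n exp(-v) dv = n!` by dominated convergence. -/

open MeasureTheory Filter Real
open scoped ENNReal

noncomputable section

open Set Finset Topology
open scoped Nat

lemma integrable_pow_mul_exp_neg_mul_sq {b : ℝ} (hb : 0 < b) (m : ℕ) :
    Integrable fun x : ℝ => x ^ m * exp (-b * x ^ 2) := by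
  simpa only [rpow_natCast] using
    integrable_rpow_mul_exp_neg_mul_sq hb (s := m) (by linarith [m.cast_nonneg (α := ℝ)])

lemma integrable_pow_mul_exp_neg_sq_div_four (m : ℕ) :
    Integrable fun y : ℝ => y ^ m * exp (-y ^ 2 / 4) := by
  convert integrable_pow_mul_exp_neg_mul_sq (b := 1 / 4) (by norm_num) m using 4
  ring

lemma sum_choose_mul_Aint_eq_integral (n : ℕ) (t : ℝ) :
    ∑ k ∈ range (n + 1), (n.choose k : ℝ) * (-1) ^ (n - k) * t ^ (n - k) * Aint t (k + 1) =
      ∫ y in Ioi t, y * (y - t) ^ n * exp (-y ^ 2 / 4) := by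
  have hint k : IntegrableOn (fun y : ℝ =>
      (n.choose k : ℝ) * (-1) ^ (n - k) * t ^ (n - k) * (y ^ (k + 1) * exp (-y ^ 2 / 4))) (Ioi t) :=
    (integrable_pow_mul_exp_neg_sq_div_four (k + 1)).integrableOn.const_mul _
  simp_rw [Aint, ← integral_const_mul]
  rw [← integral_finsetSum _ fun k _ => hint k]
  congr with y
  rw [sub_eq_add_neg, add_pow, mul_sum, sum_mul]
  refine sum_congr rfl fun k _ => ?_
  rw [neg_pow]
  ring

lemma setIntegral_Ioi_eq_integral_comp_add {E : Type*} [NormedAddCommGroup E] [NormedSpace ℝ E]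
    (f : ℝ → E) (t : ℝ) :
    ∫ y in Ioi t, f y = ∫ u in Ioi 0, f (u + t) := by
  rw [← (measurePreserving_add_right volume t).setIntegral_preimage_emb
    (measurableEmbedding_addRight t), preimage_add_const_Ioi, sub_self]

lemma integral_mul_sub_pow_mul_exp_eq (n : ℕ) {t : ℝ} (ht : 0 < t) :
    ∫ y in Ioi t, y * (y - t) ^ n * exp (-y ^ 2 / 4) =
      2 ^ (n + 1) * (t ^ n)⁻¹ * exp (-t ^ 2 / 4) *
        ∫ v in Ioi 0, (1 + 2 * (t ^ 2)⁻¹ * v) * v ^ n * exp (-v - (t ^ 2)⁻¹ * v ^ 2) := by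
  have h2t : 0 < 2 / t := by positivity
  have hsubst (v : ℝ) : (2 / t * v + t) * (2 / t * v) ^ n * exp (-(2 / t * v + t) ^ 2 / 4) =
      (2 / t) ^ n * t * exp (-t ^ 2 / 4) *
        ((1 + 2 * (t ^ 2)⁻¹ * v) * v ^ n * exp (-v - (t ^ 2)⁻¹ * v ^ 2)) := by
    have hexponent : -(2 / t * v + t) ^ 2 / 4 = -t ^ 2 / 4 + (-v - (t ^ 2)⁻¹ * v ^ 2) := by
      field_simp
      ring
    rw [hexponent, exp_add]
    field_simp
    ring
  have hscale := integral_comp_mul_left_Ioi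
    (fun u => (u + t) * u ^ n * exp (-(u + t) ^ 2 / 4)) 0 h2t
  rw [mul_zero] at hscale
  calc ∫ y in Ioi t, y * (y - t) ^ n * exp (-y ^ 2 / 4)
      = ∫ u in Ioi 0, (u + t) * u ^ n * exp (-(u + t) ^ 2 / 4) := by
        simp only [setIntegral_Ioi_eq_integral_comp_add _ t, add_sub_cancel_right]
    _ = (2 / t) • ∫ v in Ioi 0, (2 / t * v + t) * (2 / t * v) ^ n *
          exp (-(2 / t * v + t) ^ 2 / 4) := by rw [hscale, smul_inv_smul₀ h2t.ne']
    _ = _ := by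
        simp only [hsubst, integral_const_mul, smul_eq_mul]
        rw [← mul_assoc]
        congr 1
        rw [div_pow]
        field_simp
        ring

lemma integral_pow_mul_exp_neg_Ioi (n : ℕ) :
    ∫ v in Ioi 0, v ^ n * exp (-v) = n ! := by
  rw [← Gamma_nat_eq_factorial, Gamma_eq_integral (by positivity)]
  refine setIntegral_congr_fun measurableSet_Ioi fun v _ => ?_
  rw [add_sub_cancel_right, rpow_natCast, mul_comm]

lemma integrableOn_pow_mul_exp_neg_Ioi (n : ℕ) :
    IntegrableOn (fun v : ℝ => v ^ n * exp (-v)) (Ioi 0) := by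
  refine (GammaIntegral_convergent (s := n + 1) (by positivity)).congr_fun (fun v _ => ?_)
    measurableSet_Ioi
  beta_reduce
  rw [add_sub_cancel_right, rpow_natCast, mul_comm]

lemma norm_one_add_mul_pow_mul_exp_le (n : ℕ) {ε v : ℝ} (hε₀ : 0 ≤ ε) (hε₁ : ε ≤ 1)
    (hv : 0 ≤ v) :
    ‖(1 + 2 * ε * v) * v ^ n * exp (-v - ε * v ^ 2)‖ ≤ (1 + 2 * v) * v ^ n * exp (-v) := by
  have hlin : 1 + 2 * ε * v ≤ 1 + 2 * v := by nlinarith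
  have hexp : exp (-v - ε * v ^ 2) ≤ exp (-v) := exp_le_exp.2 (by nlinarith [sq_nonneg v])
  rw [norm_of_nonneg (by positivity)]
  gcongr

lemma tendsto_integral_one_add_mul_pow_mul_exp (n : ℕ) :
    Tendsto (fun ε : ℝ => ∫ v in Ioi 0, (1 + 2 * ε * v) * v ^ n * exp (-v - ε * v ^ 2))
      (𝓝[≥] 0) (𝓝 (n ! : ℝ)) := by
  rw [← integral_pow_mul_exp_neg_Ioi]
  refine tendsto_integral_filter_of_dominated_convergence
    (fun v => (1 + 2 * v) * v ^ n * exp (-v)) ?_ ?_ ?_ ?_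
  · exact Eventually.of_forall fun ε => (by fun_prop : Continuous _).aestronglyMeasurable
  · filter_upwards [Icc_mem_nhdsGE one_pos] with ε hε
    filter_upwards [ae_restrict_mem measurableSet_Ioi] with v (hv : 0 < v)
    exact norm_one_add_mul_pow_mul_exp_le n hε.1 hε.2 hv.le
  · refine ((integrableOn_pow_mul_exp_neg_Ioi n).add
      ((integrableOn_pow_mul_exp_neg_Ioi (n + 1)).const_mul 2)).congr_fun (fun v _ => ?_)
      measurableSet_Ioi
    simp only [Pi.add_apply]
    ring
  · refine Eventually.of_forall fun v => ?_
    have hcont : Continuous fun ε : ℝ => (1 + 2 * ε * v) * v ^ n * exp (-v - ε * v ^ 2) := by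
      fun_prop
    exact (hcont.tendsto' 0 _ (by simp)).mono_left nhdsWithin_le_nhds

lemma tendsto_inv_sq_atTop_nhdsGE_zero :
    Tendsto (fun t : ℝ => (t ^ 2)⁻¹) atTop (𝓝[≥] 0) :=
  tendsto_nhdsWithin_iff.2 ⟨(tendsto_pow_atTop two_ne_zero).inv_tendsto_atTop,
    Eventually.of_forall fun t => inv_nonneg.2 (sq_nonneg t)⟩

theorem alternating_sum_Aint_asymptotic_general
    (a b : ℕ) (ha : 0 < a) (j : ℕ) (hj : j ≤ a - 1) :
    Filter.Tendsto (fun t : ℝ =>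
        (∑ k ∈ Finset.range (a + b - j),
            ((a + b - 1 - j).choose k : ℝ) * (-1 : ℝ) ^ (a + b - 1 - j - k) *
              t ^ (a + b - 1 - k) * Aint t (k + 1)) /
          ((2 : ℝ) ^ (a + b - j) * (Nat.factorial (a + b - 1 - j) : ℝ) *
            t ^ (-((a : ℝ) + b - 1 - 2 * j)) * Real.exp (-t ^ 2 / 4)))
      Filter.atTop (nhds 1) := by
  obtain ⟨n, hn⟩ : ∃ n, a + b = n + j + 1 := ⟨a + b - 1 - j, by omega⟩
  have hpow (t : ℝ) : ∑ k ∈ range (n + 1), (n.choose k : ℝ) * (-1) ^ (n - k) *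
      t ^ (a + b - 1 - k) * Aint t (k + 1) = t ^ j * ∑ k ∈ range (n + 1),
        (n.choose k : ℝ) * (-1) ^ (n - k) * t ^ (n - k) * Aint t (k + 1) := by
    rw [mul_sum]
    refine sum_congr rfl fun k hk => ?_
    rw [show a + b - 1 - k = j + (n - k) by have := mem_range.1 hk; omega, pow_add]
    ring
  have hlim := ((tendsto_integral_one_add_mul_pow_mul_exp n).comp
    tendsto_inv_sq_atTop_nhdsGE_zero).div_const (n ! : ℝ)
  rw [div_self (by positivity)] at hlim
  refine hlim.congr' ?_
  filter_upwards [eventually_gt_atTop 0] with t ht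
  have hcast : -((a : ℝ) + b - 1 - 2 * j) = j - n := by
    rw [← Nat.cast_add, hn]
    push_cast
    ring
  rw [show a + b - j = n + 1 by omega, show a + b - 1 - j = n by omega, hpow,
    sum_choose_mul_Aint_eq_integral, integral_mul_sub_pow_mul_exp_eq n ht, hcast,
    rpow_sub ht, rpow_natCast, rpow_natCast]
  simp only [Function.comp_apply]
  field_simp

/-- For positive integers `a, b` and `0 ≤ j ≤ a-1`,
`∑_{k=0}^{a+b-1-j} C(a+b-1-j,k) (-1)^{a+b-1-j-k} t^{a+b-1-k} ∫_t^∞ y^{k+1} e^{-y²/4} dy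
 ∼ 2^{a+b-j} (a+b-1-j)! t^{-(a+b-1-2j)} e^{-t²/4}` as `t → ∞`. -/
theorem alternating_sum_Aint_asymptotic
    (a b : ℕ) (ha : 0 < a) (hb : 0 < b) (j : ℕ) (hj : j ≤ a - 1) :
    Filter.Tendsto (fun t : ℝ =>
        (∑ k ∈ Finset.range (a + b - j),
            ((a + b - 1 - j).choose k : ℝ) * (-1 : ℝ) ^ (a + b - 1 - j - k) *
              t ^ (a + b - 1 - k) * Aint t (k + 1)) /
          ((2 : ℝ) ^ (a + b - j) * (Nat.factorial (a + b - 1 - j) : ℝ) *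
            t ^ (-((a : ℝ) + b - 1 - 2 * j)) * Real.exp (-t ^ 2 / 4)))
      Filter.atTop (nhds 1) :=
  alternating_sum_Aint_asymptotic_general a b ha j hj

end
end

section
/- For all integers r ≥ 0 and u with 1 ≤ u ≤ 2r, Σ_{k=2u}^{2r+1} C(2r+1, k) (−1)^{k+1} · k(k−2)(k−4)⋯(k−2(u−1)) = − Σ_{ℓ=0}^{u−1} C(2r+1, 2ℓ+1) (2ℓ+1)!! (2(u−1−ℓ)−1)!! (−1)^{u−1−ℓ}, where k(k−2)⋯(k−2(u−1)) denotes the product of the u integers k, k−2, …, k−2(u−1), and C(n,k) denotes a binomial coefficient. -/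
/-!
The polynomial `x (x - 2) ⋯ (x - 2(u - 1))` has degree `u < 2r + 1`, so its `(2r + 1)`-st forward
difference `∑_{k ≤ 2r+1} (-1)^k C(2r+1, k) p(k)` vanishes, and the sum over `k ≥ 2u` is minus the
sum over `k < 2u`. On `k < 2u` the product vanishes at the even points `k = 2ℓ`, while at
`k = 2ℓ + 1` its factors are `2ℓ + 1, 2ℓ - 1, …, 1` followed by `-1, -3, …, -(2(u - 1 - ℓ) - 1)`.
-/

open Finset Polynomial
open scoped Nat

theorem Polynomial.sum_range_neg_one_pow_mul_choose_mul_eval_eq_zero {R : Type*} [CommRing R]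
    {P : R[X]} {n : ℕ} (hP : P.natDegree < n) :
    ∑ k ∈ range (n + 1), (-1 : R) ^ k * n.choose k * P.eval (k : R) = 0 := by
  have h := congr_fun (fwdDiff_iter_eq_zero_of_degree_lt hP) 0
  rw [fwdDiff_iter_eq_sum_shift, Pi.zero_apply] at h
  calc ∑ k ∈ range (n + 1), (-1 : R) ^ k * n.choose k * P.eval (k : R)
      = (-1) ^ n * ∑ k ∈ range (n + 1),
          ((-1 : ℤ) ^ (n - k) * n.choose k) • P.eval (0 + k • (1 : R)) := by
        rw [mul_sum]
        refine sum_congr rfl fun k hk => ?_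
        obtain ⟨j, rfl⟩ := Nat.exists_eq_add_of_le (Nat.lt_succ_iff.mp (mem_range.mp hk))
        rw [Nat.add_sub_cancel_left, pow_add, zsmul_eq_mul]
        push_cast
        rw [zero_add, nsmul_one]
        ring_nf
        rw [mul_comm j, pow_mul, neg_one_sq, one_pow, mul_one]
    _ = 0 := by rw [h, mul_zero]

theorem Finset.sum_range_add_sum_Ico_of_eq_zero {M : Type*} [AddCommMonoid M] {f : ℕ → M} {n : ℕ}
    (hf : ∀ k, n ≤ k → f k = 0) (m : ℕ) :
    ∑ k ∈ range m, f k + ∑ k ∈ Ico m n, f k = ∑ k ∈ range n, f k := by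
  rcases le_total m n with hmn | hnm
  · exact sum_range_add_sum_Ico f hmn
  · rw [Ico_eq_empty_of_le hnm, sum_empty, add_zero, ← sum_range_add_sum_Ico f hnm,
      sum_eq_zero fun k hk => hf k (mem_Ico.mp hk).1, add_zero]

theorem Finset.sum_range_two_mul {M : Type*} [AddCommMonoid M] (f : ℕ → M) (m : ℕ) :
    ∑ k ∈ range (2 * m), f k = ∑ l ∈ range m, (f (2 * l) + f (2 * l + 1)) := by
  induction m with
  | zero => simp
  | succ m ih => rw [mul_add_one, sum_range_succ, sum_range_succ, ih, sum_range_succ, add_assoc]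

theorem Nat.doubleFactorial_two_mul_sub_one (m : ℕ) : (2 * m - 1)‼ = ∏ i ∈ range m, (2 * i + 1) := by
  cases m with
  | zero => rfl
  | succ m =>
    rw [show 2 * (m + 1) - 1 = 2 * m + 1 by omega, doubleFactorial_eq_prod_odd, prod_range_succ',
      mul_zero, zero_add, mul_one]

theorem prod_range_succ_odd_sub_two_mul (l : ℕ) :
    ∏ i ∈ range (l + 1), ((2 * l + 1 : ℤ) - 2 * i) = ((2 * l + 1)‼ : ℤ) := by
  rw [← prod_range_reflect, show (2 * l + 1) = 2 * (l + 1) - 1 by omega,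
    Nat.doubleFactorial_two_mul_sub_one, Nat.cast_prod]
  refine prod_congr rfl fun i hi => ?_
  rw [Nat.cast_sub (by simpa [Nat.lt_succ_iff] using hi)]
  push_cast
  ring

theorem prod_range_odd_sub_two_mul (l m : ℕ) :
    ∏ i ∈ range (l + 1 + m), ((2 * l + 1 : ℤ) - 2 * i) = (2 * l + 1)‼ * (2 * m - 1)‼ * (-1) ^ m := by
  have hneg : ∏ i ∈ range m, ((2 * l + 1 : ℤ) - 2 * (l + 1 + i : ℕ))
      = ∏ i ∈ range m, ((2 * i + 1 : ℕ) : ℤ) * (-1) :=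
    prod_congr rfl fun i _ => by push_cast; ring
  rw [prod_range_add, prod_range_succ_odd_sub_two_mul, hneg, prod_mul_distrib, prod_const,
    card_range, ← Nat.cast_prod, ← Nat.doubleFactorial_two_mul_sub_one, mul_assoc]

theorem alternating_sum_falling_double_factorial_general
    (r u : ℕ) (hu2 : u ≤ 2 * r) :
    ∑ k ∈ Finset.Icc (2 * u) (2 * r + 1),
        ((2 * r + 1).choose k : ℤ) * (-1 : ℤ) ^ (k + 1) *
          ∏ i ∈ Finset.range u, ((k : ℤ) - 2 * i)
      = - ∑ ℓ ∈ Finset.range u,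
          ((2 * r + 1).choose (2 * ℓ + 1) : ℤ) * (Nat.doubleFactorial (2 * ℓ + 1) : ℤ) *
            (Nat.doubleFactorial (2 * (u - 1 - ℓ) - 1) : ℤ) * (-1 : ℤ) ^ (u - 1 - ℓ) := by
  set f : ℕ → ℤ := fun k =>
    ((2 * r + 1).choose k : ℤ) * (-1 : ℤ) ^ (k + 1) * ∏ i ∈ range u, ((k : ℤ) - 2 * i)
  have htotal : ∑ k ∈ range (2 * r + 1 + 1), f k = 0 := by
    have h := sum_range_neg_one_pow_mul_choose_mul_eval_eq_zero
      (P := ∏ i ∈ range u, (X - C (2 * (i : ℤ)))) (n := 2 * r + 1)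
      (by rw [natDegree_finsetProd_X_sub_C_eq_card, card_range]; omega)
    rw [← neg_eq_zero, ← h, ← sum_neg_distrib]
    refine sum_congr rfl fun k _ => ?_
    simp only [f, eval_prod, eval_sub, eval_X, eval_C, pow_succ]
    ring
  have hsplit := sum_range_add_sum_Ico_of_eq_zero (f := f) (n := 2 * r + 1 + 1)
    (fun k hk => by simp [f, Nat.choose_eq_zero_of_lt (show 2 * r + 1 < k by omega)]) (2 * u)
  rw [htotal, sum_range_two_mul, Ico_add_one_right_eq_Icc] at hsplit
  rw [eq_neg_of_add_eq_zero_right hsplit]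
  refine congrArg _ (sum_congr rfl fun l hl => ?_)
  have heven : f (2 * l) = 0 :=
    mul_eq_zero_of_right _ (prod_eq_zero hl (by push_cast; ring))
  obtain ⟨m, rfl⟩ := Nat.exists_eq_add_of_lt (mem_range.mp hl)
  have hodd : ∏ i ∈ range (l + m + 1), (((2 * l + 1 : ℕ) : ℤ) - 2 * i)
      = (2 * l + 1)‼ * (2 * m - 1)‼ * (-1) ^ m := by
    push_cast
    rw [add_right_comm]
    exact prod_range_odd_sub_two_mul l m
  rw [heven, zero_add]
  simp only [f]
  rw [hodd, show l + m + 1 - 1 - l = m by omega,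
    (Even.neg_one_pow ⟨l + 1, by ring⟩ : (-1 : ℤ) ^ (2 * l + 1 + 1) = 1)]
  ring

/-- For integers `r ≥ 0` and `1 ≤ u ≤ 2r`,
`∑_{k=2u}^{2r+1} C(2r+1,k) (-1)^{k+1} k(k-2)⋯(k-2(u-1))
 = -∑_{ℓ=0}^{u-1} C(2r+1,2ℓ+1) (2ℓ+1)‼ (2(u-1-ℓ)-1)‼ (-1)^{u-1-ℓ}`. -/
theorem alternating_sum_falling_double_factorial
    (r u : ℕ) (hu1 : 1 ≤ u) (hu2 : u ≤ 2 * r) :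
    ∑ k ∈ Finset.Icc (2 * u) (2 * r + 1),
        ((2 * r + 1).choose k : ℤ) * (-1 : ℤ) ^ (k + 1) *
          ∏ i ∈ Finset.range u, ((k : ℤ) - 2 * i)
      = - ∑ ℓ ∈ Finset.range u,
          ((2 * r + 1).choose (2 * ℓ + 1) : ℤ) * (Nat.doubleFactorial (2 * ℓ + 1) : ℤ) *
            (Nat.doubleFactorial (2 * (u - 1 - ℓ) - 1) : ℤ) * (-1 : ℤ) ^ (u - 1 - ℓ) :=
  alternating_sum_falling_double_factorial_general r u hu2
end

section
/- For every t > 0, Σ_{i=3}^∞ (i−2) ∫_0^∞ exp(−t²w/4) · w^{i−3} · (1+w)^{−(i−3/2)} dw ≤ 4/t² + 16/t⁴. -/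
/-!
With `x = w / (1 + w)`, the `n`-th integrand (times `n + 1`) is
`e^{-t²w/4} (1 + w)^{-3/2} (n + 1) xⁿ`. Summing under the integral (Tonelli) and using
`∑ (n + 1) xⁿ = (1 - x)⁻² = (1 + w)²` collapses the series to `∫₀^∞ e^{-bw} √(1 + w) dw` with
`b = t² / 4`, which is at most `∫₀^∞ e^{-bw} (1 + w) dw = 1 / b + 1 / b²`.
-/

open MeasureTheory Real
open scoped ENNReal

lemma pow_mul_rpow_neg_add {x : ℝ} (hx : 0 < x) (w : ℝ) (n : ℕ) (s : ℝ) :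
    w ^ n * x ^ (-((n : ℝ) + s)) = (w / x) ^ n * x ^ (-s) := by
  rw [neg_add, Real.rpow_add hx, Real.rpow_neg hx.le, Real.rpow_natCast, div_pow, div_eq_mul_inv]
  ring

lemma hasSum_succ_mul_pow_mul_rpow {w : ℝ} (hw : 0 ≤ w) (a : ℝ) :
    HasSum (fun n : ℕ => ((n : ℝ) + 1) * (a * w ^ n * (1 + w) ^ (-((n : ℝ) + 3 / 2))))
      (a * √(1 + w)) := by
  have hw1 : 0 < 1 + w := by linarith
  have hx : ‖w / (1 + w)‖ < 1 := by
    rw [Real.norm_of_nonneg (by positivity), div_lt_one hw1]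
    linarith
  have hgeom := (hasSum_choose_mul_geometric_of_norm_lt_one 1 hx).mul_left
    (a * (1 + w) ^ (-(3 / 2 : ℝ)))
  have hsum : 1 / (1 - w / (1 + w)) ^ (1 + 1) = (1 + w) ^ (2 : ℝ) := by
    rw [show 1 - w / (1 + w) = (1 + w)⁻¹ by field_simp; ring, Real.rpow_two]
    simp
  have hval : a * (1 + w) ^ (-(3 / 2 : ℝ)) * (1 + w) ^ (2 : ℝ) = a * √(1 + w) := by
    rw [mul_assoc, ← Real.rpow_add hw1, Real.sqrt_eq_rpow]
    norm_num
  rw [hsum, hval] at hgeom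
  have hterm : ∀ n : ℕ, ((n : ℝ) + 1) * (a * w ^ n * (1 + w) ^ (-((n : ℝ) + 3 / 2)))
      = a * (1 + w) ^ (-(3 / 2 : ℝ)) * (((n + 1).choose 1 : ℕ) * (w / (1 + w)) ^ n) := by
    intro n
    rw [mul_assoc a, pow_mul_rpow_neg_add hw1, Nat.choose_one_right]
    push_cast
    ring
  simpa only [hterm] using hgeom

lemma tsum_succ_mul_ofReal_pow_mul_rpow {w a : ℝ} (hw : 0 ≤ w) (ha : 0 ≤ a) :
    ∑' n : ℕ, ((n : ℝ≥0∞) + 1) * ENNReal.ofReal (a * w ^ n * (1 + w) ^ (-((n : ℝ) + 3 / 2)))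
      = ENNReal.ofReal (a * √(1 + w)) := by
  have h := hasSum_succ_mul_pow_mul_rpow hw a
  rw [← h.tsum_eq, ENNReal.ofReal_tsum_of_nonneg (fun n => by positivity) h.summable]
  congr 1 with n
  rw [ENNReal.ofReal_mul (p := (n : ℝ) + 1) (by positivity)]
  norm_cast

lemma lintegral_exp_neg_mul_mul_one_add {b : ℝ} (hb : 0 < b) :
    ∫⁻ w in Set.Ioi 0, ENNReal.ofReal (exp (-b * w) * (1 + w))
      = ENNReal.ofReal (1 / b + 1 / b ^ 2) := by
  have hint0 := exp_neg_integrableOn_Ioi 0 hb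
  have hint1 : IntegrableOn (fun w : ℝ => w * exp (-b * w)) (Set.Ioi 0) := by
    simpa using integrableOn_rpow_mul_exp_neg_mul_rpow (s := 1) (p := 1) (by norm_num) one_pos hb
  have hint : IntegrableOn (fun w : ℝ => exp (-b * w) + w * exp (-b * w)) (Set.Ioi 0) :=
    hint0.add hint1
  have h0 := integral_rpow_mul_exp_neg_mul_Ioi one_pos hb
  have h1 := integral_rpow_mul_exp_neg_mul_Ioi two_pos hb
  norm_num at h0 h1
  simp only [← neg_mul] at h0 h1
  have hsplit : ∀ w, exp (-b * w) * (1 + w) = exp (-b * w) + w * exp (-b * w) := fun w => by ring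
  simp only [hsplit]
  rw [← ofReal_integral_eq_lintegral_ofReal hint
      (ae_restrict_of_forall_mem measurableSet_Ioi fun w (hw : 0 < w) => by positivity),
    integral_add hint0 hint1, h0, h1]
  ring_nf

/-- For every `t > 0`, `∑_{i=3}^∞ (i-2) ∫_0^∞ e^{-t²w/4} w^{i-3} (1+w)^{-(i-3/2)} dw
 ≤ 4/t² + 16/t⁴` (the sum is indexed by `i = n + 3`, `n : ℕ`). -/
theorem sum_kummer_integrals_le (t : ℝ) (ht : 0 < t) :
    ∑' n : ℕ, ((n : ℝ≥0∞) + 1) *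
        ∫⁻ w in Set.Ioi (0 : ℝ),
          ENNReal.ofReal
            (Real.exp (-t ^ 2 * w / 4) * w ^ n * (1 + w) ^ (-((n : ℝ) + 3 / 2)))
      ≤ ENNReal.ofReal (4 / t ^ 2 + 16 / t ^ 4) := by
  set b := t ^ 2 / 4
  have hb : 0 < b := by positivity
  have hexp : ∀ w, -t ^ 2 * w / 4 = -b * w := fun w => by ring
  have hmeas : ∀ n : ℕ, Measurable fun w : ℝ => ENNReal.ofReal
      (Real.exp (-t ^ 2 * w / 4) * w ^ n * (1 + w) ^ (-((n : ℝ) + 3 / 2))) :=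
    fun n => by fun_prop
  calc _ = ∫⁻ w in Set.Ioi 0, ∑' n : ℕ, ((n : ℝ≥0∞) + 1) * ENNReal.ofReal
          (Real.exp (-t ^ 2 * w / 4) * w ^ n * (1 + w) ^ (-((n : ℝ) + 3 / 2))) := by
        rw [lintegral_tsum fun n => ((hmeas n).const_mul _).aemeasurable]
        exact tsum_congr fun n => (lintegral_const_mul _ (hmeas n)).symm
    _ = ∫⁻ w in Set.Ioi 0, ENNReal.ofReal (exp (-b * w) * √(1 + w)) :=
        setLIntegral_congr_fun measurableSet_Ioi fun w hw => by
          simp only [hexp]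
          exact tsum_succ_mul_ofReal_pow_mul_rpow (le_of_lt hw) (exp_nonneg _)
    _ ≤ ∫⁻ w in Set.Ioi 0, ENNReal.ofReal (exp (-b * w) * (1 + w)) :=
        setLIntegral_mono (by fun_prop) fun w (hw : 0 < w) => ENNReal.ofReal_le_ofReal <|
          mul_le_mul_of_nonneg_left (Real.sqrt_le_self_iff.2 (Or.inr (by linarith))) (exp_nonneg _)
    _ = ENNReal.ofReal (4 / t ^ 2 + 16 / t ^ 4) := by
        rw [lintegral_exp_neg_mul_mul_one_add hb]
        congr 1
        field_simp
        ring
end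

section
/- For every integer L ≥ 4 and every t > 0, Σ_{i=L}^∞ (i−2) ∫_0^∞ exp(−t²w/4) · w^{i−3} · (1+w)^{−(i−3/2)} dw ≤ 4^{L−2} (L−2)! / t^{2L−4}. -/
/-!
With `r = w / (1 + w)`, the `n`-th integrand is the first one times `r ^ n`, and
`L + n - 2 ≤ (L - 2) (n + 1)`. Summing `∑ (n + 1) r ^ n = (1 + w) ^ 2` under the integral leaves
at most `(L - 2) e^{-t²w/4} w^{L-3} (1 + w)^{7/2 - L} ≤ (L - 2) e^{-t²w/4} w^{L-3}` (as `L ≥ 4`),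
whose integral is the Gamma integral `(L - 2) (L - 3)! (4 / t²)^{L-2}`.
-/

open MeasureTheory Real Set
open scoped ENNReal Nat

lemma lintegral_exp_neg_mul_mul_pow_Ioi (k : ℕ) {z : ℝ} (hz : 0 < z) :
    ∫⁻ w in Ioi 0, ENNReal.ofReal (exp (-(z * w)) * w ^ k) =
      ENNReal.ofReal (k ! / z ^ (k + 1)) := by
  have hGamma : ∫ w in Ioi 0, exp (-(z * w)) * w ^ k = k ! / z ^ (k + 1) := by
    have := integral_rpow_mul_exp_neg_mul_Ioi (a := k + 1) (by positivity) hz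
    rw [add_sub_cancel_right, Gamma_nat_eq_factorial, ← Nat.cast_add_one, rpow_natCast,
      one_div, inv_pow, inv_mul_eq_div] at this
    rw [← this]
    simp_rw [rpow_natCast, mul_comm (exp _)]
  have hint : IntegrableOn (fun w ↦ exp (-(z * w)) * w ^ k) (Ioi 0) := by
    refine (integrableOn_rpow_mul_exp_neg_mul_rpow (p := 1) (s := k)
      (neg_one_lt_zero.trans_le k.cast_nonneg) one_pos hz).congr_fun (fun w _ ↦ ?_)
      measurableSet_Ioi
    dsimp only
    rw [rpow_one, rpow_natCast, mul_comm, neg_mul]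
  rw [← hGamma, ofReal_integral_eq_lintegral_ofReal hint]
  filter_upwards [ae_restrict_mem measurableSet_Ioi] with w (hw : 0 < w)
  positivity

lemma tsum_natCast_add_mul_geometric_le {m : ℕ} (hm : 1 ≤ m) {r : ℝ} (hr₀ : 0 ≤ r)
    (hr₁ : r < 1) :
    ∑' n : ℕ, ((m + n : ℕ) : ℝ≥0∞) * ENNReal.ofReal (r ^ n) ≤
      ENNReal.ofReal (m * (1 / (1 - r) ^ 2)) := by
  have hsum : HasSum (fun n : ℕ ↦ (m : ℝ) * ((n + 1) * r ^ n)) (m * (1 / (1 - r) ^ 2)) := by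
    have := hasSum_choose_mul_geometric_of_norm_lt_one (𝕜 := ℝ) 1
      (by rwa [norm_of_nonneg hr₀])
    simpa only [Nat.choose_one_right, Nat.cast_add_one] using this.mul_left (m : ℝ)
  have hnonneg (n : ℕ) : 0 ≤ (m : ℝ) * ((n + 1) * r ^ n) := by positivity
  rw [← hsum.tsum_eq, ENNReal.ofReal_tsum_of_nonneg hnonneg hsum.summable]
  refine ENNReal.tsum_le_tsum fun n ↦ ?_
  rw [← ENNReal.ofReal_natCast, ← ENNReal.ofReal_mul (by positivity), ← mul_assoc]
  gcongr
  have : (1 : ℝ) ≤ m := by exact_mod_cast hm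
  push_cast
  nlinarith [Nat.cast_nonneg (α := ℝ) n]

lemma pow_add_mul_one_add_rpow_neg_add {w : ℝ} (hw : 0 ≤ w) (k n : ℕ) (a : ℝ) :
    w ^ (k + n) * (1 + w) ^ (-(a + n)) = w ^ k * (1 + w) ^ (-a) * (w / (1 + w)) ^ n := by
  have h : 0 < 1 + w := by linarith
  rw [pow_add, neg_add, rpow_add h, rpow_neg h.le (n : ℝ), rpow_natCast, div_pow]
  ring

lemma tsum_natCast_sub_mul_kummer_integrand_le {L : ℕ} (hL : 4 ≤ L) {c w : ℝ} (hc : 0 ≤ c)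
    (hw : 0 < w) :
    ∑' n : ℕ, ((L + n - 2 : ℕ) : ℝ≥0∞) *
        ENNReal.ofReal (c * w ^ (L + n - 3) * (1 + w) ^ (-((L : ℝ) + n - 3 / 2))) ≤
      ENNReal.ofReal ((L - 2 : ℕ) * (c * w ^ (L - 3))) := by
  have h1w : 0 < 1 + w := by linarith
  have h1r : 1 - w / (1 + w) = (1 + w)⁻¹ := by field_simp; ring
  set r := w / (1 + w)
  set g := c * w ^ (L - 3) * (1 + w) ^ (-((L : ℝ) - 3 / 2)) with hg
  have hterm (n : ℕ) : ((L + n - 2 : ℕ) : ℝ≥0∞) *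
      ENNReal.ofReal (c * w ^ (L + n - 3) * (1 + w) ^ (-((L : ℝ) + n - 3 / 2))) =
        ENNReal.ofReal g * (((L - 2 + n : ℕ) : ℝ≥0∞) * ENNReal.ofReal (r ^ n)) := by
    rw [show L + n - 3 = L - 3 + n by omega, show L + n - 2 = L - 2 + n by omega,
      show (L : ℝ) + n - 3 / 2 = ((L : ℝ) - 3 / 2) + n by ring, mul_assoc c,
      pow_add_mul_one_add_rpow_neg_add hw.le, ← mul_assoc, ← mul_assoc,
      ENNReal.ofReal_mul (by positivity)]
    ring
  have hr₁ : r < 1 := (div_lt_one h1w).2 (by linarith)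
  have hgeom : 1 / (1 - r) ^ 2 = (1 + w) ^ (2 : ℝ) := by
    rw [h1r, rpow_two]
    field_simp
  have hdecay : (1 + w) ^ (-((L : ℝ) - 3 / 2)) * (1 + w) ^ (2 : ℝ) ≤ 1 := by
    have : (4 : ℝ) ≤ L := by exact_mod_cast hL
    rw [← rpow_add h1w]
    exact rpow_le_one_of_one_le_of_nonpos (by linarith) (by linarith)
  calc _ = ENNReal.ofReal g *
          ∑' n : ℕ, ((L - 2 + n : ℕ) : ℝ≥0∞) * ENNReal.ofReal (r ^ n) := by
        simp_rw [hterm]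
        exact ENNReal.tsum_mul_left
    _ ≤ ENNReal.ofReal g * ENNReal.ofReal ((L - 2 : ℕ) * (1 / (1 - r) ^ 2)) := by
        gcongr
        exact tsum_natCast_add_mul_geometric_le (by omega) (by positivity) hr₁
    _ = ENNReal.ofReal ((L - 2 : ℕ) * (c * w ^ (L - 3)) *
          ((1 + w) ^ (-((L : ℝ) - 3 / 2)) * (1 + w) ^ (2 : ℝ))) := by
        rw [← ENNReal.ofReal_mul (by positivity), hgeom, hg]
        congr 1
        ring
    _ ≤ ENNReal.ofReal ((L - 2 : ℕ) * (c * w ^ (L - 3))) :=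
        ENNReal.ofReal_le_ofReal (mul_le_of_le_one_right (by positivity) hdecay)

/-- For every integer `L ≥ 4` and `t > 0`,
`∑_{i=L}^∞ (i-2) ∫_0^∞ e^{-t²w/4} w^{i-3} (1+w)^{-(i-3/2)} dw ≤ 4^{L-2} (L-2)! / t^{2L-4}`
(the sum is indexed by `i = L + n`, `n : ℕ`). -/
theorem sum_kummer_integrals_tail_le (L : ℕ) (hL : 4 ≤ L) (t : ℝ) (ht : 0 < t) :
    ∑' n : ℕ, ((L + n - 2 : ℕ) : ℝ≥0∞) *
        ∫⁻ w in Set.Ioi (0 : ℝ),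
          ENNReal.ofReal
            (Real.exp (-t ^ 2 * w / 4) * w ^ (L + n - 3) *
              (1 + w) ^ (-((L : ℝ) + n - 3 / 2)))
      ≤ ENNReal.ofReal
          ((4 : ℝ) ^ (L - 2) * (Nat.factorial (L - 2) : ℝ) / t ^ (2 * L - 4)) := by
  have hexp (w : ℝ) : exp (-t ^ 2 * w / 4) = exp (-(t ^ 2 / 4 * w)) := by ring_nf
  calc _ = ∫⁻ w in Ioi 0, ∑' n : ℕ, ((L + n - 2 : ℕ) : ℝ≥0∞) *
          ENNReal.ofReal (exp (-t ^ 2 * w / 4) * w ^ (L + n - 3) *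
            (1 + w) ^ (-((L : ℝ) + n - 3 / 2))) := by
        rw [lintegral_tsum fun n ↦ by fun_prop]
        simp_rw [lintegral_const_mul' _ _ (ENNReal.natCast_ne_top _)]
    _ ≤ ∫⁻ w in Ioi 0,
          ENNReal.ofReal ((L - 2 : ℕ) * (exp (-(t ^ 2 / 4 * w)) * w ^ (L - 3))) := by
        refine setLIntegral_mono' measurableSet_Ioi fun w hw ↦ ?_
        simpa only [hexp] using tsum_natCast_sub_mul_kummer_integrand_le hL (exp_nonneg _) hw
    _ = ENNReal.ofReal ((L - 2 : ℕ) * ((L - 3) ! / (t ^ 2 / 4) ^ (L - 3 + 1))) := by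
        simp_rw [ENNReal.ofReal_mul (Nat.cast_nonneg _)]
        rw [lintegral_const_mul' _ _ ENNReal.ofReal_ne_top,
          lintegral_exp_neg_mul_mul_pow_Ioi _ (by positivity)]
    _ = _ := by
        congr 1
        obtain ⟨k, rfl⟩ := Nat.exists_eq_add_of_le' hL
        rw [show k + 4 - 2 = k + 1 + 1 by omega, show k + 4 - 3 = k + 1 by omega,
          show 2 * (k + 4) - 4 = 2 * (k + 1 + 1) by omega, Nat.factorial_succ (k + 1), div_pow,
          ← pow_mul]
        push_cast
        field_simp
end

section
/- For every integer k ≥ 2, 0 ≤ Γ(k)/Γ(k − 1/2) − √(k−1) ≤ 1/(6√(k−1)). -/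
open MeasureTheory Filter Real
open scoped ENNReal

noncomputable section

/-!
Put `q x = (Γ(x+1)/Γ(x+1/2))²` (`gammaRatioSq`). Log-convexity of `Γ` at the midpoints `x + 1/2` and `x + 1` gives
`x ≤ q x ≤ x + 1/2`, and `Γ(s+1) = s Γ(s)` gives `q (x+1) = ((x+1)/(x+1/2))² q x`. Under this
recursion the excess `q x - (x + 1/3)`, once nonnegative, grows by at least `1/(48 x)` per step;
as the harmonic series diverges, it would eventually exceed the bound `1/6`. Hence
`x ≤ q x < x + 1/3`, and taking square roots with `√(x + 1/3) ≤ √x + 1/(6√x)` gives the claim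
at `x = k - 1`.
-/

open Finset

namespace Real

theorem Gamma_midpoint_sq_le {s t : ℝ} (hs : 0 < s) (ht : 0 < t) :
    Gamma ((s + t) / 2) ^ 2 ≤ Gamma s * Gamma t := by
  have h := Gamma_mul_add_mul_le_rpow_Gamma_mul_rpow_Gamma hs ht one_half_pos one_half_pos
    (add_halves 1)
  rw [← sqrt_eq_rpow, ← sqrt_eq_rpow, ← sqrt_mul (Gamma_pos_of_pos hs).le,
    show 1 / 2 * s + 1 / 2 * t = (s + t) / 2 by ring] at h
  exact (le_sqrt (Gamma_pos_of_pos (by positivity)).le (by positivity)).1 h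

theorem tendsto_sum_range_one_div_add_atTop {x : ℝ} (hx : 0 < x) :
    Tendsto (fun m : ℕ => ∑ j ∈ range m, 1 / (x + j)) atTop atTop := by
  refine tendsto_atTop_mono (fun m => ?_)
    (tendsto_sum_range_one_div_nat_succ_atTop.const_mul_atTop (inv_pos.2 (by linarith : 0 < x + 1)))
  rw [mul_sum]
  refine sum_le_sum fun j _ => ?_
  rw [← one_div, div_mul_div_comm, one_mul]
  gcongr
  nlinarith [(j.cast_nonneg : (0 : ℝ) ≤ j)]

theorem sqrt_add_third_le {x : ℝ} (hx : 0 < x) : √(x + 1 / 3) ≤ √x + 1 / (6 * √x) := by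
  have hs : 0 < √x := sqrt_pos.2 hx
  rw [sqrt_le_iff]
  refine ⟨by positivity, ?_⟩
  have expand : (√x + 1 / (6 * √x)) ^ 2 = x + 1 / 3 + 1 / (36 * x) := by
    field_simp
    rw [sq_sqrt hx.le]
    ring
  rw [expand]
  linarith [show 0 < 1 / (36 * x) by positivity]

end Real

def gammaRatioSq (x : ℝ) : ℝ := (Gamma (x + 1) / Gamma (x + 1 / 2)) ^ 2

theorem le_gammaRatioSq {x : ℝ} (hx : 0 < x) : x ≤ gammaRatioSq x := by
  have hmid := Gamma_midpoint_sq_le hx (by linarith : 0 < x + 1)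
  rw [show (x + (x + 1)) / 2 = x + 1 / 2 by ring] at hmid
  rw [gammaRatioSq, div_pow, le_div_iff₀ (pow_pos (Gamma_pos_of_pos (by linarith)) 2)]
  calc x * Gamma (x + 1 / 2) ^ 2 ≤ x * (Gamma x * Gamma (x + 1)) := by gcongr
    _ = Gamma (x + 1) ^ 2 := by rw [Gamma_add_one hx.ne']; ring

theorem gammaRatioSq_le {x : ℝ} (hx : -(1 / 2) < x) : gammaRatioSq x ≤ x + 1 / 2 := by
  have hpos : 0 < x + 1 / 2 := by linarith
  have hmid := Gamma_midpoint_sq_le hpos (by linarith : 0 < x + 3 / 2)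
  rw [show (x + 1 / 2 + (x + 3 / 2)) / 2 = x + 1 by ring,
    show x + 3 / 2 = x + 1 / 2 + 1 by ring, Gamma_add_one hpos.ne'] at hmid
  rw [gammaRatioSq, div_pow, div_le_iff₀ (pow_pos (Gamma_pos_of_pos hpos) 2)]
  linarith

theorem gammaRatioSq_add_one {x : ℝ} (hx : -(1 / 2) < x) :
    gammaRatioSq (x + 1) = ((x + 1) / (x + 1 / 2)) ^ 2 * gammaRatioSq x := by
  have hpos : 0 < x + 1 / 2 := by linarith
  have hG : Gamma (x + 1 / 2) ≠ 0 := (Gamma_pos_of_pos hpos).ne'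
  rw [gammaRatioSq, gammaRatioSq, Gamma_add_one (by linarith : x + 1 ≠ 0),
    show x + 1 + 1 / 2 = x + 1 / 2 + 1 by ring, Gamma_add_one hpos.ne']
  field_simp

theorem gammaRatioSq_excess_add_one {y : ℝ} (hy : 1 / 2 ≤ y) (h : y + 1 / 3 ≤ gammaRatioSq y) :
    gammaRatioSq y - (y + 1 / 3) + 1 / y / 48 ≤ gammaRatioSq (y + 1) - (y + 1 + 1 / 3) := by
  have hy0 : 0 < y := by linarith
  rw [gammaRatioSq_add_one (by linarith)]
  set q := gammaRatioSq y
  have split : ((y + 1) / (y + 1 / 2)) ^ 2 * q - (y + 1 + 1 / 3) =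
      ((y + 1) / (y + 1 / 2)) ^ 2 * (q - (y + 1 / 3)) + y / (12 * (y + 1 / 2) ^ 2) := by
    field_simp
    ring
  have hfactor : 1 ≤ ((y + 1) / (y + 1 / 2)) ^ 2 :=
    one_le_pow₀ ((one_le_div (by linarith)).2 (by linarith))
  have hincr : 1 / y / 48 ≤ y / (12 * (y + 1 / 2) ^ 2) := by
    rw [div_div, div_le_div_iff₀ (by positivity) (by positivity)]
    nlinarith
  rw [split]
  nlinarith

theorem gammaRatioSq_excess_add_nat {x : ℝ} (hx : 1 / 2 ≤ x) (h : x + 1 / 3 ≤ gammaRatioSq x)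
    (m : ℕ) :
    gammaRatioSq x - (x + 1 / 3) + (∑ j ∈ range m, 1 / (x + j)) / 48 ≤
      gammaRatioSq (x + m) - (x + m + 1 / 3) := by
  induction m with
  | zero => simp
  | succ m ih =>
    have hsum : 0 ≤ ∑ j ∈ range m, 1 / (x + j) :=
      sum_nonneg fun j _ => by positivity
    have hstep := gammaRatioSq_excess_add_one (y := x + m)
      (by linarith [m.cast_nonneg (α := ℝ)]) (by linarith)
    rw [sum_range_succ, add_div, Nat.cast_succ, ← add_assoc x]
    linarith

theorem gammaRatioSq_lt {x : ℝ} (hx : 1 / 2 ≤ x) : gammaRatioSq x < x + 1 / 3 := by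
  by_contra! h
  obtain ⟨m, hm⟩ :=
    ((tendsto_sum_range_one_div_add_atTop (by linarith : 0 < x)).eventually_gt_atTop 8).exists
  have hgrow := gammaRatioSq_excess_add_nat hx h m
  have hbound := gammaRatioSq_le (x := x + m) (by linarith [m.cast_nonneg (α := ℝ)])
  linarith

/-- For every integer `k ≥ 2`, `0 ≤ Γ(k)/Γ(k-1/2) - √(k-1) ≤ 1/(6√(k-1))`. -/
theorem gamma_ratio_sub_sqrt_bounds (k : ℕ) (hk : 2 ≤ k) :
    0 ≤ Real.Gamma (k : ℝ) / Real.Gamma ((k : ℝ) - 1 / 2) - Real.sqrt ((k : ℝ) - 1) ∧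
      Real.Gamma (k : ℝ) / Real.Gamma ((k : ℝ) - 1 / 2) - Real.sqrt ((k : ℝ) - 1) ≤
        1 / (6 * Real.sqrt ((k : ℝ) - 1)) := by
  set x : ℝ := (k : ℝ) - 1
  have hx : 1 ≤ x := by
    have : (2 : ℝ) ≤ k := by exact_mod_cast hk
    linarith
  have hratio : Gamma k / Gamma (k - 1 / 2) = √(gammaRatioSq x) := by
    rw [gammaRatioSq, sqrt_sq (div_nonneg (Gamma_pos_of_pos (by linarith)).le
      (Gamma_pos_of_pos (by linarith)).le)]
    congr 2 <;> ring
  rw [hratio]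
  constructor
  · exact sub_nonneg.2 (sqrt_le_sqrt (le_gammaRatioSq (by linarith)))
  · rw [sub_le_iff_le_add']
    calc √(gammaRatioSq x) ≤ √(x + 1 / 3) := sqrt_le_sqrt (gammaRatioSq_lt (by linarith)).le
      _ ≤ √x + 1 / (6 * √x) := sqrt_add_third_le (by linarith)

end
end
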